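/- arXiv:1310.5365 — 11 statements merged into one kernel-verified Lean document; each statement's English description precedes it below -/
import Mathlib

section
/- Let k be a field and B, C nonzero finite-dimensional k-vector spaces. Suppose A is a k-subspace of B ⊗_k C such that (1) for every nonzero b ∈ B there exists a nonzero c ∈ C with b ⊗ c ∈ A, and (2) for every nonzero c ∈ C there exists a nonzero b ∈ B with b ⊗ c ∈ A. Then dim_k(A) ≥ dim_k(B) + dim_k(C) − 1. -/
open TensorProduct Module

/-!
Call `b ∈ B` covered if `b ⊗ c ∈ A` for some `c ≠ 0`, and dually for `c ∈ C`. The bound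
`dim A + 1 ≥ dim B + dim C` already holds when all nonzero vectors of `C` are covered but only the
vectors of `B` outside some proper subspace `B₀` are; we prove this by induction on
`dim B + dim C`. Pick `b₁ ∉ B₀` and let `A'` be the image of `A` in `(B ⧸ k b₁) ⊗ C`. The kernel
of `A → A'` is `b₁ ⊗ S` with `S = {c | b₁ ⊗ c ∈ A} ≠ 0`, so `dim A = dim A' + dim S`. In `A'`
every nonzero vector of `B ⧸ k b₁` is covered (for `b ∈ B₀` use `b + b₁ ∉ B₀`), and so is every
`c ∉ S`. With the roles of the factors exchanged, the induction hypothesis for the exceptional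
subspace `S` gives `dim A' + 1 ≥ dim B + dim C - 1` if `S ≠ C`; if `S = C`, the simpler bound
`dim A ≥ dim B` for `A` covering all of `B` gives `dim A' ≥ dim B - 1`.
-/

universe u v w

theorem Submodule.finrank_comap_add_finrank_map_of_exact {R M N P : Type*} [Field R]
    [AddCommGroup M] [Module R M] [AddCommGroup N] [Module R N] [AddCommGroup P] [Module R P]
    [FiniteDimensional R N] {f : M →ₗ[R] N} {g : N →ₗ[R] P} (hf : Function.Injective f)
    (hfg : Function.Exact f g) (A : Submodule R N) :
    finrank R (A.comap f) + finrank R (A.map g) = finrank R A := by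
  have h := (g.domRestrict A).finrank_range_add_finrank_ker
  rw [LinearMap.range_domRestrict, LinearMap.ker_domRestrict, hfg.linearMap_ker_eq] at h
  have hcomap := (Submodule.equivMapOfInjective f hf (A.comap f)).finrank_eq
  have hker := (Submodule.equivMapOfInjective A.subtype A.injective_subtype
    ((LinearMap.range f).comap A.subtype)).finrank_eq
  rw [Submodule.map_comap_eq] at hcomap
  rw [Submodule.map_comap_subtype, inf_comm] at hker
  omega

theorem Submodule.finrank_quotient_span_singleton_add_one {K V : Type*} [Field K]
    [AddCommGroup V] [Module K V] [FiniteDimensional K V] {v : V} (hv : v ≠ 0) :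
    finrank K (V ⧸ span K {v}) + 1 = finrank K V := by
  rw [← finrank_span_singleton (K := K) hv, Submodule.finrank_quotient_add_finrank]

namespace TensorProduct

section CommRing

variable {R M N : Type*} [CommRing R] [AddCommGroup M] [Module R M] [AddCommGroup N] [Module R N]

theorem mk_eq_rTensor_toSpanSingleton_comp_lid_symm (m : M) :
    mk R M N m =
      (LinearMap.toSpanSingleton R M m).rTensor N ∘ₗ (TensorProduct.lid R N).symm := by
  ext; simp

theorem exact_mk_rTensor_mkQ_span (m : M) :
    Function.Exact (mk R M N m) ((Submodule.span R {m}).mkQ.rTensor N) := by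
  rw [mk_eq_rTensor_toSpanSingleton_comp_lid_symm, LinearEquiv.precomp_exact_iff_exact]
  refine rTensor_exact N ?_ (Submodule.mkQ_surjective _)
  rw [LinearMap.exact_iff, Submodule.ker_mkQ, LinearMap.span_singleton_eq_range]

end CommRing

variable {k B C : Type*} [Field k] [AddCommGroup B] [Module k B] [AddCommGroup C] [Module k C]

theorem mk_injective_of_ne_zero {b : B} (hb : b ≠ 0) : Function.Injective (mk k B C b) := by
  rw [mk_eq_rTensor_toSpanSingleton_comp_lid_symm]
  exact (Module.Flat.rTensor_preserves_injective_linearMap _ (smul_left_injective k hb)).comp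
    (TensorProduct.lid k C).symm.injective

theorem finrank_comap_mk_add_finrank_map_rTensor_mkQ [FiniteDimensional k B]
    [FiniteDimensional k C] (A : Submodule k (B ⊗[k] C)) {b : B} (hb : b ≠ 0) :
    finrank k (A.comap (mk k B C b)) + finrank k (A.map ((Submodule.span k {b}).mkQ.rTensor C)) =
      finrank k A :=
  A.finrank_comap_add_finrank_map_of_exact (mk_injective_of_ne_zero hb)
    (exact_mk_rTensor_mkQ_span b)

end TensorProduct

namespace Submodule

variable {k B C : Type*} [Field k] [AddCommGroup B] [Module k B] [AddCommGroup C] [Module k C]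

def LeftCoveredOutside (A : Submodule k (B ⊗[k] C)) (B₀ : Submodule k B) : Prop :=
  ∀ b ∉ B₀, ∃ c : C, c ≠ 0 ∧ b ⊗ₜ[k] c ∈ A

def RightCoveredOutside (A : Submodule k (B ⊗[k] C)) (C₀ : Submodule k C) : Prop :=
  ∀ c ∉ C₀, ∃ b : B, b ≠ 0 ∧ b ⊗ₜ[k] c ∈ A

variable {A : Submodule k (B ⊗[k] C)}

theorem tmul_mem_map_comm {b : B} {c : C} :
    c ⊗ₜ[k] b ∈ A.map (TensorProduct.comm k B C).toLinearMap ↔ b ⊗ₜ[k] c ∈ A := by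
  rw [map_equiv_eq_comap_symm]
  simp

theorem leftCoveredOutside_map_comm {C₀ : Submodule k C} :
    (A.map (TensorProduct.comm k B C).toLinearMap).LeftCoveredOutside C₀ ↔
      A.RightCoveredOutside C₀ := by
  simp only [LeftCoveredOutside, RightCoveredOutside, tmul_mem_map_comm]

theorem rightCoveredOutside_map_comm {B₀ : Submodule k B} :
    (A.map (TensorProduct.comm k B C).toLinearMap).RightCoveredOutside B₀ ↔
      A.LeftCoveredOutside B₀ := by
  simp only [LeftCoveredOutside, RightCoveredOutside, tmul_mem_map_comm]

theorem LeftCoveredOutside.comap_congr {B' C' : Type*} [AddCommGroup B'] [Module k B']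
    [AddCommGroup C'] [Module k C'] (e : B' ≃ₗ[k] B) (f : C' ≃ₗ[k] C) {B₀ : Submodule k B}
    (hA : A.LeftCoveredOutside B₀) :
    (A.comap (TensorProduct.congr e f).toLinearMap).LeftCoveredOutside
      (B₀.comap e.toLinearMap) := by
  intro b hb
  obtain ⟨c, hc, hbc⟩ := hA (e b) hb
  exact ⟨f.symm c, by simpa using hc, by simpa using hbc⟩

theorem RightCoveredOutside.comap_congr {B' C' : Type*} [AddCommGroup B'] [Module k B']
    [AddCommGroup C'] [Module k C'] (e : B' ≃ₗ[k] B) (f : C' ≃ₗ[k] C) {C₀ : Submodule k C}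
    (hA : A.RightCoveredOutside C₀) :
    (A.comap (TensorProduct.congr e f).toLinearMap).RightCoveredOutside
      (C₀.comap f.toLinearMap) := by
  intro c hc
  obtain ⟨b, hb, hbc⟩ := hA (f c) hc
  exact ⟨e.symm b, by simpa using hb, by simpa using hbc⟩

theorem tmul_mem_map_rTensor {B' : Type*} [AddCommGroup B'] [Module k B'] (f : B →ₗ[k] B')
    {b : B} {c : C} (h : b ⊗ₜ[k] c ∈ A) : f b ⊗ₜ[k] c ∈ A.map (f.rTensor C) :=
  mem_map_of_mem (f := f.rTensor C) h

theorem comap_mk_ne_bot {b : B} {c : C} (hc : c ≠ 0) (h : b ⊗ₜ[k] c ∈ A) :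
    A.comap (TensorProduct.mk k B C b) ≠ ⊥ :=
  (Submodule.ne_bot_iff _).2 ⟨c, h, hc⟩

theorem LeftCoveredOutside.map_rTensor_mkQ_span {B₀ : Submodule k B}
    (hA : A.LeftCoveredOutside B₀) {b₁ : B} (hb₁ : b₁ ∉ B₀) :
    (A.map ((span k {b₁}).mkQ.rTensor C)).LeftCoveredOutside ⊥ := by
  intro x hx
  obtain ⟨b, rfl⟩ := mkQ_surjective _ x
  -- a vector of `B₀` has the same image as `b + b₁ ∉ B₀`
  by_cases hb : b ∈ B₀
  · obtain ⟨c, hc, hbc⟩ := hA (b + b₁) fun h => hb₁ (by simpa using sub_mem h hb)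
    refine ⟨c, hc, ?_⟩
    simpa [(Quotient.mk_eq_zero _).2 (mem_span_singleton_self b₁)] using
      tmul_mem_map_rTensor (span k {b₁}).mkQ hbc
  · obtain ⟨c, hc, hbc⟩ := hA b hb
    exact ⟨c, hc, tmul_mem_map_rTensor (span k {b₁}).mkQ hbc⟩

theorem RightCoveredOutside.map_rTensor_mkQ_span {C₀ : Submodule k C}
    (hA : A.RightCoveredOutside C₀) (b₁ : B) :
    (A.map ((span k {b₁}).mkQ.rTensor C)).RightCoveredOutside
      (C₀ ⊔ A.comap (TensorProduct.mk k B C b₁)) := by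
  intro c hc
  obtain ⟨b, hb, hbc⟩ := hA c fun h => hc (mem_sup_left h)
  refine ⟨(span k {b₁}).mkQ b, fun hb0 => hc (mem_sup_right ?_),
    tmul_mem_map_rTensor (span k {b₁}).mkQ hbc⟩
  obtain ⟨t, rfl⟩ := mem_span_singleton.1 ((Quotient.mk_eq_zero _).1 hb0)
  have ht : t ≠ 0 := by rintro rfl; simp at hb
  rwa [← smul_tmul', A.smul_mem_iff ht] at hbc

theorem finrank_le_finrank_of_leftCoveredOutside_bot {B : Type u} [AddCommGroup B] [Module k B]
    [FiniteDimensional k B] [FiniteDimensional k C] {A : Submodule k (B ⊗[k] C)}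
    (hA : A.LeftCoveredOutside ⊥) : finrank k B ≤ finrank k A := by
  induction hn : finrank k B generalizing B with
  | zero => exact Nat.zero_le _
  | succ n ih =>
    have : Nontrivial B := Module.nontrivial_of_finrank_eq_succ hn
    obtain ⟨b, hb⟩ := exists_ne (0 : B)
    obtain ⟨c, hc, hbc⟩ := hA b (by simpa using hb)
    have hslice := one_le_finrank_iff.2 (comap_mk_ne_bot hc hbc)
    have hquot := ih (hA.map_rTensor_mkQ_span (b₁ := b) (by simpa using hb))
      (by have := finrank_quotient_span_singleton_add_one (K := k) hb; omega)
    have hsplit := TensorProduct.finrank_comap_mk_add_finrank_map_rTensor_mkQ A hb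
    omega

theorem finrank_add_finrank_le_of_leftCoveredOutside {B C : Type u} [AddCommGroup B]
    [Module k B] [AddCommGroup C] [Module k C] [FiniteDimensional k B] [FiniteDimensional k C]
    {A : Submodule k (B ⊗[k] C)} {B₀ : Submodule k B} (hB₀ : B₀ ≠ ⊤)
    (hB : A.LeftCoveredOutside B₀) (hC : A.RightCoveredOutside ⊥) :
    finrank k B + finrank k C ≤ finrank k A + 1 := by
  induction hN : finrank k B + finrank k C using Nat.strong_induction_on
    generalizing B C with
  | _ N ih =>
  obtain ⟨b₁, hb₁⟩ := SetLike.exists_not_mem_of_ne_top B₀ hB₀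
  have hb₁0 : b₁ ≠ 0 := fun h => hb₁ (h ▸ B₀.zero_mem)
  set S := A.comap (TensorProduct.mk k B C b₁)
  set A' := A.map ((span k {b₁}).mkQ.rTensor C)
  have hsplit : finrank k S + finrank k A' = finrank k A :=
    TensorProduct.finrank_comap_mk_add_finrank_map_rTensor_mkQ A hb₁0
  have hquot := finrank_quotient_span_singleton_add_one (K := k) hb₁0
  have hB' : A'.LeftCoveredOutside ⊥ := hB.map_rTensor_mkQ_span hb₁
  have hC' : A'.RightCoveredOutside S := by simpa using hC.map_rTensor_mkQ_span b₁
  by_cases hS : S = ⊤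
  · have := finrank_le_finrank_of_leftCoveredOutside_bot hB'
    rw [hS, finrank_top] at hsplit
    omega
  · obtain ⟨c, hc, hbc⟩ := hB b₁ hb₁
    have hS1 : 1 ≤ finrank k S := one_le_finrank_iff.2 (comap_mk_ne_bot hc hbc)
    -- swap the factors: now `C` is covered outside `S` and `B ⧸ k b₁` everywhere
    have := ih _ (by omega) hS (leftCoveredOutside_map_comm.2 hC')
      (rightCoveredOutside_map_comm.2 hB') rfl
    rw [LinearEquiv.finrank_map_eq] at this
    omega

theorem finrank_add_finrank_le_of_coveredOutside_bot {B : Type v} {C : Type w} [AddCommGroup B]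
    [Module k B] [AddCommGroup C] [Module k C] [FiniteDimensional k B] [FiniteDimensional k C]
    [Nontrivial B] {A : Submodule k (B ⊗[k] C)} (hB : A.LeftCoveredOutside ⊥)
    (hC : A.RightCoveredOutside ⊥) : finrank k B + finrank k C ≤ finrank k A + 1 := by
  -- the induction exchanges the two factors, so it needs them in a common universe
  let eB : ULift.{w} B ≃ₗ[k] B := ULift.moduleEquiv
  let eC : ULift.{v} C ≃ₗ[k] C := ULift.moduleEquiv
  have := finrank_add_finrank_le_of_leftCoveredOutside
    (A := A.comap (TensorProduct.congr eB eC).toLinearMap) bot_ne_top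
    (by simpa using hB.comap_congr eB eC) (by simpa using hC.comap_congr eB eC)
  rwa [eB.finrank_eq, eC.finrank_eq, comap_equiv_eq_map_symm, LinearEquiv.finrank_map_eq] at this

end Submodule

theorem stmt0_general (k B C : Type*) [Field k] [AddCommGroup B] [Module k B]
    [AddCommGroup C] [Module k C] [FiniteDimensional k B] [FiniteDimensional k C]
    [Nontrivial B]
    (A : Submodule k (B ⊗[k] C))
    (hB : ∀ b : B, b ≠ 0 → ∃ c : C, c ≠ 0 ∧ b ⊗ₜ[k] c ∈ A)
    (hC : ∀ c : C, c ≠ 0 → ∃ b : B, b ≠ 0 ∧ b ⊗ₜ[k] c ∈ A) :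
    finrank k B + finrank k C - 1 ≤ finrank k A := by
  have := Submodule.finrank_add_finrank_le_of_coveredOutside_bot (A := A)
    (fun b hb => hB b (by simpa using hb)) (fun c hc => hC c (by simpa using hc))
  omega

/-- **Proposition 2.1** (de Seguins Pazzis / Bergman). If `A` is a subspace of `B ⊗ C`
containing, for each nonzero `b`, a nonzero pure tensor `b ⊗ c`, and dually, then
`dim A ≥ dim B + dim C - 1`. -/
theorem stmt0 (k B C : Type*) [Field k] [AddCommGroup B] [Module k B]
    [AddCommGroup C] [Module k C] [FiniteDimensional k B] [FiniteDimensional k C]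
    [Nontrivial B] [Nontrivial C]
    (A : Submodule k (B ⊗[k] C))
    (hB : ∀ b : B, b ≠ 0 → ∃ c : C, c ≠ 0 ∧ b ⊗ₜ[k] c ∈ A)
    (hC : ∀ c : C, c ≠ 0 → ∃ b : B, b ≠ 0 ∧ b ⊗ₜ[k] c ∈ A) :
    finrank k B + finrank k C - 1 ≤ finrank k A :=
  stmt0_general k B C A hB hC
end

section
/- Let A, B, C be finite-dimensional vector spaces over a field k and f : A × B → C a bilinear map such that every nonzero a ∈ A induces a nonzero linear map f(a,−) : B → C, but this property fails on restriction to every proper subspace of B (i.e., for every proper subspace B₀ ⊂ B some nonzero a ∈ A satisfies f(a, B₀) = 0), and fails on composition with the quotient map onto every proper quotient of C (i.e., for every nonzero subspace C₀ ⊆ C some nonzero a ∈ A satisfies f(a, B) ⊆ C₀, where we take C₀ the kernel of the quotient). Then dim(A) ≥ dim(B) + dim(C) − 1. -/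
/-!
Replace `f` by the subspace `M = range f` of `B →ₗ[k] C`, of dimension at most `dim A`. The
hypotheses say that every nonzero `ℓ ∈ B*` and every nonzero `c ∈ C` is a factor of some rank-one
map `ℓ.smulRight c ∈ M`; we show `dim B + dim C ≤ dim M + 1` by induction on `dim B + dim C`.

If some evaluation `φ ↦ φ b` maps `M` onto `C`, its kernel contains independent rank-one maps
`ℓᵢ.smulRight cᵢ` with `ℓᵢ` a basis of the annihilator of `b`; dually if some `φ ↦ γ ∘ φ` maps
`M` onto `B*`. Over an infinite field the first case always occurs, since `C` is not a finite union
of the proper subspaces `M(bᵢ)`. Otherwise, if for some line `⟨c₀⟩` every `ℓ` still has a partner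
`c ∉ ⟨c₀⟩`, pass to `C ⧸ ⟨c₀⟩`: the hypotheses survive and `dim M` drops; dually restrict to a
hyperplane `ker ℓ₀`. If neither reduction applies, every `ℓ` is the only partner (up to scalars) of
some `c`, and vice versa; over `𝔽_q` this embeds the affine chart `{ℓ | ℓ b = 1}` into `M(b) \ 0`,
so `dim B < dim C`, and symmetrically `dim C < dim B`.
-/

open Module

namespace Submodule

variable {k V W : Type*} [Field k] [AddCommGroup V] [Module k V] [AddCommGroup W] [Module k W]

theorem finrank_map_add_finrank_le [FiniteDimensional k V] (φ : V →ₗ[k] W) {M D : Submodule k V}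
    (hDM : D ≤ M) (hDφ : D ≤ LinearMap.ker φ) :
    finrank k (M.map φ) + finrank k D ≤ finrank k M := by
  have hsum := (φ.domRestrict M).finrank_range_add_finrank_ker
  rw [LinearMap.range_domRestrict, LinearMap.ker_domRestrict] at hsum
  have hD : finrank k D ≤ finrank k ((LinearMap.ker φ).comap M.subtype) := by
    rw [← (comapSubtypeEquivOfLe hDM).finrank_eq]
    exact finrank_mono (comap_mono hDφ)
  omega

theorem finrank_map_lt [FiniteDimensional k V] (φ : V →ₗ[k] W) {M : Submodule k V} {x : V}
    (hxM : x ∈ M) (hx : x ≠ 0) (hφx : φ x = 0) : finrank k (M.map φ) < finrank k M := by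
  have := finrank_map_add_finrank_le φ ((span_singleton_le_iff_mem x M).2 hxM)
    ((span_singleton_le_iff_mem x _).2 hφx)
  rw [finrank_span_singleton hx] at this
  omega

theorem eq_span_singleton_of_le {p : Submodule k V} {x : V} (hp : p ≠ ⊥) (hpx : p ≤ k ∙ x) :
    p = k ∙ x := by
  obtain ⟨y, hyp, hy⟩ := p.exists_mem_ne_zero_of_ne_bot hp
  obtain ⟨t, rfl⟩ := mem_span_singleton.1 (hpx hyp)
  have ht : t ≠ 0 := by rintro rfl; simp at hy
  exact hpx.antisymm <| (span_singleton_le_iff_mem _ _).2 <| (p.smul_mem_iff ht).1 hyp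

end Submodule

namespace LinearMap

section CommSemiring

variable {R M M₁ M₂ : Type*} [CommSemiring R] [AddCommMonoid M] [Module R M]
  [AddCommMonoid M₁] [Module R M₁] [AddCommMonoid M₂] [Module R M₂]

theorem comp_smulRight (f : M →ₗ[R] M₁) (ℓ : M₂ →ₗ[R] R) (x : M) :
    f.comp (ℓ.smulRight x) = ℓ.smulRight (f x) := by
  ext; simp

theorem smulRight_comp (ℓ : M₂ →ₗ[R] R) (x : M) (g : M₁ →ₗ[R] M₂) :
    (ℓ.smulRight x).comp g = (ℓ.comp g).smulRight x :=
  rfl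

end CommSemiring

variable {k B C : Type*} [Field k] [AddCommGroup B] [Module k B] [AddCommGroup C] [Module k C]

theorem linearIndependent_smulRight_of_left {ι : Type*} [Fintype ι] {ℓ : ι → Dual k B}
    {c : ι → C} (hℓ : LinearIndependent k ℓ) (hc : ∀ i, c i ≠ 0) :
    LinearIndependent k fun i ↦ (ℓ i).smulRight (c i) := by
  rw [Fintype.linearIndependent_iff] at hℓ ⊢
  intro g hg i
  obtain ⟨γ, hγ⟩ := Projective.exists_dual_eq_one k (hc i)
  have hγg : ∑ j, (g j * γ (c j)) • ℓ j = 0 := by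
    ext b
    simpa [mul_comm, mul_left_comm] using congr(γ ($hg b))
  simpa [hγ] using hℓ _ hγg i

theorem linearIndependent_smulRight_of_right {ι : Type*} [Fintype ι] {ℓ : ι → Dual k B}
    {c : ι → C} (hc : LinearIndependent k c) (hℓ : ∀ i, ℓ i ≠ 0) :
    LinearIndependent k fun i ↦ (ℓ i).smulRight (c i) := by
  rw [Fintype.linearIndependent_iff] at hc ⊢
  intro g hg i
  obtain ⟨b, hb⟩ := DFunLike.ne_iff.1 (hℓ i)
  have := hc _ (by simpa [smul_smul] using congr($hg b)) i
  exact (mul_eq_zero.1 this).resolve_right (by simpa using hb)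

theorem eq_smulRight_of_ker_le {g : B →ₗ[k] C} {ℓ : Dual k B} (hℓ : ℓ ≠ 0)
    (h : ker ℓ ≤ ker g) : ∃ c : C, g = ℓ.smulRight c := by
  obtain ⟨b₀, hb₀⟩ := range_eq_top.1 (Dual.range_eq_top_of_ne_zero hℓ) 1
  refine ⟨g b₀, ext fun b ↦ ?_⟩
  have := h (show b - ℓ b • b₀ ∈ ker ℓ by simp [hb₀])
  simpa [sub_eq_zero] using this

theorem eq_smulRight_of_range_le {g : B →ₗ[k] C} {c : C} (hc : c ≠ 0) (h : range g ≤ k ∙ c) :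
    ∃ ℓ : Dual k B, g = ℓ.smulRight c := by
  obtain ⟨γ, hγ⟩ := Projective.exists_dual_eq_one k hc
  refine ⟨γ.comp g, ext fun b ↦ ?_⟩
  obtain ⟨t, ht⟩ := Submodule.mem_span_singleton.1 (h (mem_range_self g b))
  simp [← ht, hγ]

end LinearMap

namespace Module

variable {k V W : Type*} [Field k] [AddCommGroup V] [Module k V] [AddCommGroup W] [Module k W]

theorem Dual.mem_span_singleton_of_ker_le {ℓ₀ ℓ : Dual k V}
    (h : LinearMap.ker ℓ₀ ≤ LinearMap.ker ℓ) : ℓ ∈ k ∙ ℓ₀ := by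
  simpa using mem_span_of_iInf_ker_le_ker (L := fun _ : Unit ↦ ℓ₀) (by simpa using h)

theorem finrank_lt_of_levelSet_injective [Finite k] [FiniteDimensional k V]
    [FiniteDimensional k W] {ξ : Dual k V} (hξ : ξ ≠ 0) {W' : Submodule k W} (hW' : W' ≠ ⊤)
    (g : {v : V // ξ v = 1} → {w : W' // w ≠ 0}) (hg : Function.Injective g) :
    finrank k V < finrank k W := by
  classical
  have := finite_of_finite k (M := W)
  have := Fintype.ofFinite W'
  obtain ⟨v₀, hv₀⟩ := LinearMap.range_eq_top.1 (Dual.range_eq_top_of_ne_zero hξ) 1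
  have hlevel : {v : V // ξ v = 1} ≃ LinearMap.ker ξ :=
    (Equiv.subRight v₀).subtypeEquiv fun v ↦ by simp [sub_eq_zero, hv₀]
  have hcard := Nat.card_le_card_of_injective g hg
  have hne : Nat.card {w : W' // w ≠ 0} = Nat.card W' - 1 := by
    simp [Nat.card_eq_fintype_card, Fintype.card_subtype_compl]
  rw [Nat.card_congr hlevel, hne, natCard_eq_pow_finrank (K := k),
    natCard_eq_pow_finrank (K := k) (V := W')] at hcard
  have hq : 1 < Nat.card k := Finite.one_lt_card
  have hlt : finrank k (LinearMap.ker ξ) < finrank k W' :=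
    (Nat.pow_lt_pow_iff_right hq).1 (hcard.trans_lt (Nat.sub_lt (by positivity) one_pos))
  have := Dual.finrank_ker_add_one_of_ne_zero hξ
  have := Submodule.finrank_lt hW'
  omega

end Module

namespace Submodule

variable {k B C : Type*} [Field k] [AddCommGroup B] [Module k B] [AddCommGroup C] [Module k C]

section Factors

variable (M : Submodule k (B →ₗ[k] C))

def leftFactors (c : C) : Submodule k (Dual k B) :=
  M.comap (LinearMap.smulRightₗ.flip c)

def rightFactors (ℓ : Dual k B) : Submodule k C :=
  M.comap (LinearMap.smulRightₗ ℓ)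

variable {M}

@[simp]
theorem mem_leftFactors {c : C} {ℓ : Dual k B} : ℓ ∈ M.leftFactors c ↔ ℓ.smulRight c ∈ M :=
  Iff.rfl

@[simp]
theorem mem_rightFactors {ℓ : Dual k B} {c : C} : c ∈ M.rightFactors ℓ ↔ ℓ.smulRight c ∈ M :=
  Iff.rfl

section Quotient

variable {C' : Type*} [AddCommGroup C'] [Module k C']

theorem map_rightFactors_le_rightFactors_map_compRight (f : C →ₗ[k] C') (ℓ : Dual k B) :
    (M.rightFactors ℓ).map f ≤ (M.map (LinearMap.compRight k f)).rightFactors ℓ := by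
  rintro _ ⟨c, hc, rfl⟩
  exact ⟨_, hc, LinearMap.comp_smulRight f ℓ c⟩

theorem leftFactors_le_leftFactors_map_compRight (f : C →ₗ[k] C') (c : C) :
    M.leftFactors c ≤ (M.map (LinearMap.compRight k f)).leftFactors (f c) :=
  fun ℓ hℓ ↦ ⟨_, hℓ, LinearMap.comp_smulRight f ℓ c⟩

theorem rightFactors_map_compRight_mkQ_ne_bot {p : Submodule k C} {ℓ : Dual k B}
    (h : ¬M.rightFactors ℓ ≤ p) : (M.map (LinearMap.compRight k p.mkQ)).rightFactors ℓ ≠ ⊥ := by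
  refine ne_bot_of_le_ne_bot ?_ (map_rightFactors_le_rightFactors_map_compRight p.mkQ ℓ)
  rwa [ne_eq, ← LinearMap.le_ker_iff_map, ker_mkQ]

theorem leftFactors_map_compRight_ne_bot (hI : ∀ c : C, c ≠ 0 → M.leftFactors c ≠ ⊥)
    {f : C →ₗ[k] C'} (hf : Function.Surjective f) {c' : C'} (hc' : c' ≠ 0) :
    (M.map (LinearMap.compRight k f)).leftFactors c' ≠ ⊥ := by
  obtain ⟨c, rfl⟩ := hf c'
  exact ne_bot_of_le_ne_bot (hI c (by rintro rfl; simp at hc'))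
    (leftFactors_le_leftFactors_map_compRight f c)

end Quotient

section Restriction

variable {B' : Type*} [AddCommGroup B'] [Module k B']

theorem rightFactors_le_rightFactors_map_lcomp (g : B' →ₗ[k] B) (ℓ : Dual k B) :
    M.rightFactors ℓ ≤ (M.map (LinearMap.lcomp k C g)).rightFactors (g.dualMap ℓ) :=
  fun c hc ↦ ⟨_, hc, LinearMap.smulRight_comp ℓ c g⟩

theorem map_leftFactors_le_leftFactors_map_lcomp (g : B' →ₗ[k] B) (c : C) :
    (M.leftFactors c).map g.dualMap ≤ (M.map (LinearMap.lcomp k C g)).leftFactors c := by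
  rintro _ ⟨ℓ, hℓ, rfl⟩
  exact ⟨_, hℓ, LinearMap.smulRight_comp ℓ c g⟩

theorem rightFactors_map_lcomp_ne_bot (hK : ∀ ℓ : Dual k B, ℓ ≠ 0 → M.rightFactors ℓ ≠ ⊥)
    {g : B' →ₗ[k] B} (hg : Function.Injective g) {ℓ' : Dual k B'} (hℓ' : ℓ' ≠ 0) :
    (M.map (LinearMap.lcomp k C g)).rightFactors ℓ' ≠ ⊥ := by
  obtain ⟨ℓ, rfl⟩ := LinearMap.dualMap_surjective_of_injective hg ℓ'
  exact ne_bot_of_le_ne_bot (hK ℓ (by rintro rfl; simp at hℓ'))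
    (rightFactors_le_rightFactors_map_lcomp g ℓ)

theorem leftFactors_map_lcomp_ker_subtype_ne_bot {ℓ₀ : Dual k B} {c : C}
    (h : ¬M.leftFactors c ≤ k ∙ ℓ₀) :
    (M.map (LinearMap.lcomp k C (LinearMap.ker ℓ₀).subtype)).leftFactors c ≠ ⊥ := by
  refine ne_bot_of_le_ne_bot ?_ (map_leftFactors_le_leftFactors_map_lcomp _ c)
  refine fun hbot ↦ h fun ℓ hℓ ↦ Dual.mem_span_singleton_of_ker_le fun b hb ↦ ?_
  have : (LinearMap.ker ℓ₀).subtype.dualMap ℓ = 0 :=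
    (LinearMap.le_ker_iff_map.2 hbot) hℓ
  simpa using congr($this ⟨b, hb⟩)

end Restriction

end Factors

variable [FiniteDimensional k B] {M : Submodule k (B →ₗ[k] C)}

theorem exists_map_applyₗ_eq_top [Infinite k] (hI : ∀ c : C, c ≠ 0 → M.leftFactors c ≠ ⊥)
    (hB : 0 < finrank k B) : ∃ b : B, b ≠ 0 ∧ M.map (LinearMap.applyₗ b) = ⊤ := by
  let e := Module.finBasis k B
  suffices ∃ i, M.map (LinearMap.applyₗ (e i)) = ⊤ by
    obtain ⟨i, hi⟩ := this
    exact ⟨e i, e.ne_zero i, hi⟩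
  refine Subspace.exists_eq_top_of_iUnion_eq_univ <| Set.eq_univ_of_forall fun c ↦ ?_
  rcases eq_or_ne c 0 with rfl | hc
  · exact Set.mem_iUnion.2 ⟨⟨0, hB⟩, zero_mem _⟩
  obtain ⟨ℓ, hℓM, hℓ⟩ := exists_mem_ne_zero_of_ne_bot (hI c hc)
  obtain ⟨i, hi⟩ : ∃ i, ℓ (e i) ≠ 0 := not_forall.1 fun h ↦ hℓ (e.ext fun i ↦ by simpa using h i)
  refine Set.mem_iUnion.2 ⟨i, ((M.map _).smul_mem_iff hi).1 ⟨_, hℓM, ?_⟩⟩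
  simp

variable [FiniteDimensional k C]

theorem finrank_add_finrank_le_of_map_applyₗ_eq_top
    (hK : ∀ ℓ : Dual k B, ℓ ≠ 0 → M.rightFactors ℓ ≠ ⊥) {b : B} (hb : b ≠ 0)
    (htop : M.map (LinearMap.applyₗ b) = ⊤) :
    finrank k B + finrank k C ≤ finrank k M + 1 := by
  let D : Submodule k (Dual k B) := LinearMap.ker (Dual.eval k B b)
  have hD : finrank k D + 1 = finrank k B := by
    rw [← Subspace.dual_finrank_eq (V := B)]
    exact Dual.finrank_ker_add_one_of_ne_zero ((Module.eval_apply_eq_zero_iff k b).not.2 hb)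
  have := Module.Free.of_divisionRing k D
  let e := Module.finBasis k D
  have he : ∀ i, (e i : Dual k B) ≠ 0 := fun i h ↦ e.ne_zero i (Subtype.ext h)
  choose c hcM hc using fun i ↦ exists_mem_ne_zero_of_ne_bot (hK _ (he i))
  have hv : LinearIndependent k fun i ↦ (e i : Dual k B).smulRight (c i) :=
    LinearMap.linearIndependent_smulRight_of_left
      (e.linearIndependent.map_injOn D.subtype D.injective_subtype.injOn) hc
  have := finrank_map_add_finrank_le (LinearMap.applyₗ b)
    (D := span k (Set.range fun i ↦ (e i : Dual k B).smulRight (c i)))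
    (span_le.2 <| Set.range_subset_iff.2 hcM)
    (span_le.2 <| Set.range_subset_iff.2 fun i ↦ by
      simp [show (e i : Dual k B) b = 0 from (e i).2])
  rw [htop, finrank_top, finrank_span_eq_card hv, Fintype.card_fin] at this
  omega

theorem finrank_add_finrank_le_of_map_compRight_eq_top
    (hI : ∀ c : C, c ≠ 0 → M.leftFactors c ≠ ⊥) {γ : Dual k C} (hγ : γ ≠ 0)
    (htop : M.map (LinearMap.compRight k γ) = ⊤) :
    finrank k B + finrank k C ≤ finrank k M + 1 := by
  let D := LinearMap.ker γ
  have hD : finrank k D + 1 = finrank k C := Dual.finrank_ker_add_one_of_ne_zero hγ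
  let e := Module.finBasis k D
  have he : ∀ i, (e i : C) ≠ 0 := fun i h ↦ e.ne_zero i (Subtype.ext h)
  choose ℓ hℓM hℓ using fun i ↦ exists_mem_ne_zero_of_ne_bot (hI _ (he i))
  have hv : LinearIndependent k fun i ↦ (ℓ i).smulRight (e i : C) :=
    LinearMap.linearIndependent_smulRight_of_right
      (e.linearIndependent.map_injOn D.subtype D.injective_subtype.injOn) hℓ
  have := finrank_map_add_finrank_le (LinearMap.compRight k γ)
    (D := span k (Set.range fun i ↦ (ℓ i).smulRight (e i : C)))
    (span_le.2 <| Set.range_subset_iff.2 hℓM)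
    (span_le.2 <| Set.range_subset_iff.2 fun i ↦ by
      simp [LinearMap.comp_smulRight, show γ (e i) = 0 from (e i).2])
  rw [htop, finrank_top, Subspace.dual_finrank_eq, finrank_span_eq_card hv,
    Fintype.card_fin] at this
  omega

theorem finrank_lt_of_leftFactors_eq [Finite k] {b : B} (hb : b ≠ 0)
    (hMb : M.map (LinearMap.applyₗ b) ≠ ⊤)
    (hpin : ∀ ℓ : Dual k B, ℓ ≠ 0 → ∃ c : C, c ≠ 0 ∧ M.leftFactors c = k ∙ ℓ) :
    finrank k B < finrank k C := by
  have key : ∀ ℓ : {ℓ : Dual k B // Dual.eval k B b ℓ = 1},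
      ∃ c : {c : M.map (LinearMap.applyₗ b) // c ≠ 0}, M.leftFactors c = k ∙ ℓ.1 := by
    rintro ⟨ℓ, hℓ⟩
    replace hℓ : ℓ b = 1 := hℓ
    obtain ⟨c, hc, hcℓ⟩ := hpin ℓ (by rintro rfl; simp at hℓ)
    have hmem : ℓ.smulRight c ∈ M := by
      rw [← mem_leftFactors, hcℓ]
      exact mem_span_singleton_self ℓ
    exact ⟨⟨⟨c, _, hmem, by simp [hℓ]⟩, fun h ↦ hc congr(($h).1)⟩, hcℓ⟩
  choose g hg using key
  rw [← Subspace.dual_finrank_eq (V := B)]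
  refine finrank_lt_of_levelSet_injective ((Module.eval_apply_eq_zero_iff k b).not.2 hb) hMb g
    fun ℓ₁ ℓ₂ h ↦ ?_
  have hspan : k ∙ ℓ₁.1 = k ∙ ℓ₂.1 := by rw [← hg, ← hg, h]
  obtain ⟨t, ht⟩ := mem_span_singleton.1 (hspan ▸ mem_span_singleton_self ℓ₂.1)
  have h₁ : (ℓ₁ : Dual k B) b = 1 := ℓ₁.2
  have h₂ : (ℓ₂ : Dual k B) b = 1 := ℓ₂.2
  have ht1 : t = 1 := by simpa [h₁, h₂] using congr($ht b)
  ext1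
  rw [← ht, ht1, one_smul]

theorem finrank_lt_of_rightFactors_eq [Finite k] {γ : Dual k C} (hγ : γ ≠ 0)
    (hMγ : M.map (LinearMap.compRight k γ) ≠ ⊤)
    (hpin : ∀ c : C, c ≠ 0 → ∃ ℓ : Dual k B, ℓ ≠ 0 ∧ M.rightFactors ℓ = k ∙ c) :
    finrank k C < finrank k B := by
  have key : ∀ c : {c : C // γ c = 1},
      ∃ ℓ : {ℓ : M.map (LinearMap.compRight k γ) // ℓ ≠ 0}, M.rightFactors ℓ = k ∙ c.1 := by
    rintro ⟨c, hc⟩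
    obtain ⟨ℓ, hℓ, hℓc⟩ := hpin c (by rintro rfl; simp at hc)
    have hmem : ℓ.smulRight c ∈ M := by
      rw [← mem_rightFactors, hℓc]
      exact mem_span_singleton_self c
    refine ⟨⟨⟨ℓ, _, hmem, ?_⟩, fun h ↦ hℓ congr(($h).1)⟩, hℓc⟩
    ext b
    simp [hc]
  choose g hg using key
  rw [← Subspace.dual_finrank_eq (V := B)]
  refine finrank_lt_of_levelSet_injective hγ hMγ g fun c₁ c₂ h ↦ ?_
  have hspan : k ∙ c₁.1 = k ∙ c₂.1 := by rw [← hg, ← hg, h]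
  obtain ⟨t, ht⟩ := mem_span_singleton.1 (hspan ▸ mem_span_singleton_self c₂.1)
  have ht1 : t = 1 := by simpa [c₁.2, c₂.2] using congr(γ $ht)
  ext1
  rw [← ht, ht1, one_smul]

theorem exists_map_eq_top_or_exists_factors_not_le
    (hK : ∀ ℓ : Dual k B, ℓ ≠ 0 → M.rightFactors ℓ ≠ ⊥)
    (hI : ∀ c : C, c ≠ 0 → M.leftFactors c ≠ ⊥) (hB : 0 < finrank k B) (hC : 0 < finrank k C) :
    (∃ b : B, b ≠ 0 ∧ M.map (LinearMap.applyₗ b) = ⊤) ∨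
      (∃ γ : Dual k C, γ ≠ 0 ∧ M.map (LinearMap.compRight k γ) = ⊤) ∨
      (∃ c₀ : C, c₀ ≠ 0 ∧ ∀ ℓ : Dual k B, ℓ ≠ 0 → ¬M.rightFactors ℓ ≤ k ∙ c₀) ∨
      (∃ ℓ₀ : Dual k B, ℓ₀ ≠ 0 ∧ ∀ c : C, c ≠ 0 → ¬M.leftFactors c ≤ k ∙ ℓ₀) := by
  by_contra! ⟨hMb, hMγ, hc₀, hℓ₀⟩
  obtain hk | hk := finite_or_infinite k
  · obtain ⟨b, hb⟩ := finrank_pos_iff_exists_ne_zero.1 hB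
    obtain ⟨γ, hγ⟩ :=
      finrank_pos_iff_exists_ne_zero.1 (Subspace.dual_finrank_eq (K := k) (V := C) ▸ hC)
    have := finrank_lt_of_leftFactors_eq hb (hMb b hb) fun ℓ hℓ ↦
      (hℓ₀ ℓ hℓ).imp fun c ⟨hc, hle⟩ ↦ ⟨hc, eq_span_singleton_of_le (hI c hc) hle⟩
    have := finrank_lt_of_rightFactors_eq hγ (hMγ γ hγ) fun c hc ↦
      (hc₀ c hc).imp fun ℓ ⟨hℓ, hle⟩ ↦ ⟨hℓ, eq_span_singleton_of_le (hK ℓ hℓ) hle⟩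
    omega
  · obtain ⟨b, hb, htop⟩ := exists_map_applyₗ_eq_top hI hB
    exact hMb b hb htop

theorem finrank_add_finrank_le_finrank_add_one
    (hK : ∀ ℓ : Dual k B, ℓ ≠ 0 → M.rightFactors ℓ ≠ ⊥)
    (hI : ∀ c : C, c ≠ 0 → M.leftFactors c ≠ ⊥) :
    finrank k B + finrank k C ≤ finrank k M + 1 := by
  induction hN : finrank k B + finrank k C using Nat.strong_induction_on generalizing B C with
  | _ N ih =>
  subst hN
  rcases (finrank k B).eq_zero_or_pos with hB | hB
  · suffices finrank k C = 0 by omega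
    by_contra hC
    obtain ⟨c, hc⟩ := finrank_pos_iff_exists_ne_zero.1 (Nat.pos_of_ne_zero hC)
    have := (subsingleton_dual_iff k).2 (finrank_zero_iff.1 hB)
    exact hI c hc (Subsingleton.elim _ _)
  rcases (finrank k C).eq_zero_or_pos with hC | hC
  · obtain ⟨b, hb⟩ := finrank_pos_iff_exists_ne_zero.1 hB
    have := finrank_zero_iff.1 hC
    exact finrank_add_finrank_le_of_map_applyₗ_eq_top hK hb (Subsingleton.elim _ _)
  rcases exists_map_eq_top_or_exists_factors_not_le hK hI hB hC with
    ⟨b, hb, htop⟩ | ⟨γ, hγ, htop⟩ | ⟨c₀, hc₀, hc₀K⟩ | ⟨ℓ₀, hℓ₀, hℓ₀I⟩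
  · exact finrank_add_finrank_le_of_map_applyₗ_eq_top hK hb htop
  · exact finrank_add_finrank_le_of_map_compRight_eq_top hI hγ htop
  · let p := k ∙ c₀
    have hp : finrank k (C ⧸ p) + 1 = finrank k C := by
      rw [← finrank_span_singleton (K := k) hc₀]
      exact p.finrank_quotient_add_finrank
    obtain ⟨ℓ₀, hℓ₀M, hℓ₀⟩ := exists_mem_ne_zero_of_ne_bot (hI c₀ hc₀)
    have hlt := finrank_map_lt (LinearMap.compRight k p.mkQ) hℓ₀M (by simp [hℓ₀, hc₀])
      (by simp [LinearMap.comp_smulRight, p, mem_span_singleton_self])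
    have := ih _ (by omega) (M := M.map (LinearMap.compRight k p.mkQ))
      (fun ℓ hℓ ↦ rightFactors_map_compRight_mkQ_ne_bot (hc₀K ℓ hℓ))
      (fun _ ↦ leftFactors_map_compRight_ne_bot hI p.mkQ_surjective) rfl
    omega
  · let B₀ := LinearMap.ker ℓ₀
    have hB₀ : finrank k B₀ + 1 = finrank k B := Dual.finrank_ker_add_one_of_ne_zero hℓ₀
    obtain ⟨c₀, hc₀M, hc₀⟩ := exists_mem_ne_zero_of_ne_bot (hK ℓ₀ hℓ₀)
    have hlt := finrank_map_lt (LinearMap.lcomp k C B₀.subtype) hc₀M (by simp [hℓ₀, hc₀])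
      (LinearMap.ext fun b ↦ by simp [LinearMap.lcomp_apply, LinearMap.mem_ker.1 b.2])
    have := ih _ (by omega) (M := M.map (LinearMap.lcomp k C B₀.subtype))
      (fun _ ↦ rightFactors_map_lcomp_ne_bot hK B₀.injective_subtype)
      (fun c hc ↦ leftFactors_map_lcomp_ker_subtype_ne_bot (hℓ₀I c hc)) rfl
    omega

end Submodule

section Bilinear

variable {k A B C : Type*} [Field k] [AddCommGroup A] [Module k A] [AddCommGroup B] [Module k B]
  [AddCommGroup C] [Module k C] {f : A →ₗ[k] B →ₗ[k] C}

theorem rightFactors_range_ne_bot (h0 : ∀ a : A, a ≠ 0 → f a ≠ 0)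
    (hB : ∀ B₀ : Submodule k B, B₀ ≠ ⊤ → ∃ a : A, a ≠ 0 ∧ ∀ b ∈ B₀, f a b = 0)
    {ℓ : Dual k B} (hℓ : ℓ ≠ 0) : (LinearMap.range f).rightFactors ℓ ≠ ⊥ := by
  obtain ⟨a, ha, hfa⟩ := hB (LinearMap.ker ℓ) (mt LinearMap.ker_eq_top.1 hℓ)
  obtain ⟨c, hc⟩ := LinearMap.eq_smulRight_of_ker_le hℓ fun b hb ↦ hfa b hb
  refine (Submodule.ne_bot_iff _).2 ⟨c, ⟨a, hc⟩, ?_⟩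
  rintro rfl
  exact h0 a ha (by simpa using hc)

theorem leftFactors_range_ne_bot (h0 : ∀ a : A, a ≠ 0 → f a ≠ 0)
    (hC : ∀ C₀ : Submodule k C, C₀ ≠ ⊥ → ∃ a : A, a ≠ 0 ∧ ∀ b : B, f a b ∈ C₀)
    {c : C} (hc : c ≠ 0) : (LinearMap.range f).leftFactors c ≠ ⊥ := by
  obtain ⟨a, ha, hfa⟩ := hC (k ∙ c) (by simpa using hc)
  obtain ⟨ℓ, hℓ⟩ := LinearMap.eq_smulRight_of_range_le hc (LinearMap.range_le_iff_comap.2 <|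
    eq_top_iff.2 fun b _ ↦ hfa b)
  refine (Submodule.ne_bot_iff _).2 ⟨ℓ, ⟨a, hℓ⟩, ?_⟩
  rintro rfl
  exact h0 a ha (by simpa using hℓ)

end Bilinear

/-- **Corollary 2.2.** For a bilinear map `f : A × B → C` on finite-dimensional vector
spaces such that every nonzero `a` acts nontrivially, but this fails on restriction to
every proper subspace of `B` and on composition with every proper quotient of `C`,
one has `dim A ≥ dim B + dim C - 1`. -/
theorem stmt1 (k A B C : Type*) [Field k]
    [AddCommGroup A] [Module k A] [AddCommGroup B] [Module k B]
    [AddCommGroup C] [Module k C]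
    [FiniteDimensional k A] [FiniteDimensional k B] [FiniteDimensional k C]
    (f : A →ₗ[k] B →ₗ[k] C)
    (h0 : ∀ a : A, a ≠ 0 → f a ≠ 0)
    (hB : ∀ B₀ : Submodule k B, B₀ ≠ ⊤ → ∃ a : A, a ≠ 0 ∧ ∀ b ∈ B₀, f a b = 0)
    (hC : ∀ C₀ : Submodule k C, C₀ ≠ ⊥ → ∃ a : A, a ≠ 0 ∧ ∀ b : B, f a b ∈ C₀) :
    finrank k B + finrank k C - 1 ≤ finrank k A := by
  have := Submodule.finrank_add_finrank_le_finrank_add_one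
    (fun _ ↦ rightFactors_range_ne_bot h0 hB) (fun _ ↦ leftFactors_range_ne_bot h0 hC)
  have := LinearMap.finrank_range_le f
  omega
end

section
/- If R is a left Artinian local ring with soc(R) central in R, then the residue division ring R/J(R) is commutative, i.e., a field. -/
/-!
Let `s ≠ 0` lie in a minimal two-sided ideal `I`. Then `s` and `s * a` lie in `I`, so both are
central, and `s * (a * b - b * a) = (s * a) * b - (s * b) * a = b * (s * a) - (b * s) * a = 0`.
An element killed by a nonzero central element has no unit left multiple, and in a local ring
such elements form the Jacobson radical.
-/

namespace TwoSidedIdeal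

variable {R : Type*} [Ring R]

theorem asIdeal_strictMono : StrictMono (asIdeal (R := R)) :=
  asIdeal.monotone.strictMono_of_injective fun I J h =>
    ext fun x => by simpa only [mem_asIdeal] using SetLike.ext_iff.mp h x

instance [IsArtinianRing R] : WellFoundedLT (TwoSidedIdeal R) :=
  asIdeal_strictMono.wellFoundedLT

theorem exists_isAtom [Nontrivial R] [IsArtinianRing R] : ∃ I : TwoSidedIdeal R, IsAtom I :=
  let ⟨I, hI, _⟩ := (IsAtomic.eq_bot_or_exists_atom_le (⊤ : TwoSidedIdeal R)).resolve_left
    (by simp)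
  ⟨I, hI⟩

theorem exists_mem_ne_zero_of_ne_bot {I : TwoSidedIdeal R} (hI : I ≠ ⊥) : ∃ x ∈ I, x ≠ 0 := by
  contrapose! hI
  exact ext fun x =>
    ⟨fun hx => (mem_bot R).mpr (hI x hx), fun hx => (mem_bot R).mp hx ▸ zero_mem I⟩

end TwoSidedIdeal

theorem mul_commutator_eq_zero_of_commute {R : Type*} [Ring R] {s a : R}
    (hs : ∀ r, Commute s r) (hsa : ∀ r, Commute (s * a) r) (b : R) :
    s * (a * b - b * a) = 0 := by
  rw [mul_sub, ← mul_assoc, ← mul_assoc, (hsa b).eq, (hs b).eq, mul_assoc, sub_self]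

namespace IsLocalRing

variable {R : Type*} [Ring R] [IsLocalRing R]

theorem mem_jacobson_bot_of_forall_not_isUnit_mul {x : R} (hx : ∀ y, ¬IsUnit (y * x)) :
    x ∈ Ideal.jacobson (⊥ : Ideal R) := by
  refine Ideal.mem_jacobson_iff.mpr fun y => ?_
  have hunit : IsUnit (y * x + 1) :=
    (isUnit_or_isUnit_of_isUnit_add (by simp : IsUnit (y * x + 1 + -(y * x)))).resolve_right
      (by simpa [neg_mul] using hx (-y))
  obtain ⟨z, hz⟩ := hunit.exists_left_inv
  exact ⟨z, by rw [Ideal.mem_bot, mul_assoc, ← mul_add_one, hz, sub_self]⟩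

theorem mem_jacobson_bot_of_mul_eq_zero {s x : R} (hs0 : s ≠ 0) (hs : ∀ r, Commute s r)
    (hsx : s * x = 0) : x ∈ Ideal.jacobson (⊥ : Ideal R) :=
  mem_jacobson_bot_of_forall_not_isUnit_mul fun y hy =>
    hs0 <| hy.mul_left_eq_zero.mp <| by rw [← mul_assoc, (hs y).eq, mul_assoc, hsx, mul_zero]

end IsLocalRing

/-- If `R` is a left Artinian local ring whose (two-sided) socle is central, then the
residue division ring `R/J(R)` is commutative; equivalently, all additive commutators
`a*b - b*a` lie in the Jacobson radical. -/
theorem stmt3 (R : Type*) [Ring R] [IsArtinianRing R] [IsLocalRing R]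
    (hcentral : ∀ a ∈ sSup {I : TwoSidedIdeal R | IsAtom I}, ∀ r : R, a * r = r * a) :
    ∀ a b : R, a * b - b * a ∈ (Ideal.jacobson ⊥ : Ideal R) := by
  obtain ⟨I, hI⟩ := TwoSidedIdeal.exists_isAtom (R := R)
  obtain ⟨s, hsI, hs0⟩ := TwoSidedIdeal.exists_mem_ne_zero_of_ne_bot hI.ne_bot
  have hcomm : ∀ x ∈ I, ∀ r, Commute x r := fun x hx =>
    hcentral x (le_sSup (s := {I | IsAtom I}) hI hx)
  intro a b
  exact IsLocalRing.mem_jacobson_bot_of_mul_eq_zero hs0 (hcomm s hsI)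
    (mul_commutator_eq_zero_of_commute (hcomm s hsI) (hcomm _ (I.mul_mem_right s a hsI)) b)
end

section
/- Let D be a division ring and Y a left D-vector space. If Y₁, …, Y_n are proper subspaces of Y with n ≤ card(D), then Y ≠ Y₁ ∪ … ∪ Y_n. -/
/-!
Induction on the number of subspaces. Given `y` outside `Y₁, …, Yₙ` and `x` outside `Yₙ₊₁ ∋ y`,
each `Yᵢ` with `i ≤ n` meets the line `t ↦ x + t • y` in at most one point, so fewer than `card D`
parameters are excluded and some `x + t • y` avoids all `n + 1` subspaces.
-/

open Cardinal

namespace Submodule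

variable {ι D Y : Type*} [DivisionRing D] [AddCommGroup Y] [Module D Y]

theorem setOf_add_smul_mem_subsingleton {p : Submodule D Y} (x : Y) {y : Y} (hy : y ∉ p) :
    {t : D | x + t • y ∈ p}.Subsingleton := by
  intro t₁ ht₁ t₂ ht₂
  by_contra hne
  have hdiff : (t₁ - t₂) • y ∈ p := by
    simpa only [sub_smul, add_sub_add_left_eq_sub] using p.sub_mem ht₁ ht₂
  exact hy ((p.smul_mem_iff (sub_ne_zero.mpr hne)).mp hdiff)

theorem exists_add_smul_forall_notMem (s : Finset ι) (p : ι → Submodule D Y) (x : Y) {y : Y}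
    (hy : ∀ i ∈ s, y ∉ p i) (hs : (s.card : Cardinal) < #D) :
    ∃ t : D, ∀ i ∈ s, x + t • y ∉ p i := by
  classical
  -- the only parameter, if any, at which the line through `x` in direction `y` meets `p i`
  let hit (i : ι) : D := if h : ∃ t : D, x + t • y ∈ p i then h.choose else 0
  obtain ⟨t, ht⟩ := exists_notMem_of_length_lt (s.toList.map hit) (by simpa using hs)
  refine ⟨t, fun i hi hmem => ht ?_⟩
  have hex : ∃ t : D, x + t • y ∈ p i := ⟨t, hmem⟩
  have hhit : hit i = t := by
    rw [show hit i = hex.choose from dif_pos hex]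
    exact setOf_add_smul_mem_subsingleton x (hy i hi) hex.choose_spec hmem
  exact List.mem_map.mpr ⟨i, Finset.mem_toList.mpr hi, hhit⟩

theorem exists_forall_notMem_of_card_le (s : Finset ι) (p : ι → Submodule D Y)
    (hp : ∀ i ∈ s, p i ≠ ⊤) (hs : (s.card : Cardinal) ≤ #D) :
    ∃ x : Y, ∀ i ∈ s, x ∉ p i := by
  classical
  induction s using Finset.induction_on with
  | empty => exact ⟨0, by simp⟩
  | insert j s hj ih =>
    rw [Finset.card_insert_of_notMem hj] at hs
    have hs_lt : (s.card : Cardinal) < #D :=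
      lt_of_lt_of_le (Nat.cast_lt.mpr (Nat.lt_succ_self _)) hs
    obtain ⟨y, hy⟩ := ih (fun i hi => hp i (Finset.mem_insert_of_mem hi)) hs_lt.le
    by_cases hyj : y ∈ p j
    · obtain ⟨x, hx⟩ : ∃ x, x ∉ p j := by
        by_contra! h
        exact hp j (Finset.mem_insert_self j s) (eq_top_iff'.mpr h)
      obtain ⟨t, ht⟩ := exists_add_smul_forall_notMem s p x hy hs_lt
      refine ⟨x + t • y, (Finset.forall_mem_insert _ _ _).mpr ⟨?_, ht⟩⟩
      rwa [(p j).add_mem_iff_left ((p j).smul_mem t hyj)]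
    · exact ⟨y, (Finset.forall_mem_insert _ _ _).mpr ⟨hyj, hy⟩⟩

end Submodule

/-- **Lemma 3.5, first part.** A vector space over a division ring `D` is not the union
of `n ≤ card D` proper subspaces. -/
theorem stmt4 (D Y : Type*) [DivisionRing D] [AddCommGroup Y] [Module D Y]
    (n : ℕ) (Ys : Fin n → Submodule D Y) (hprop : ∀ i, Ys i ≠ ⊤)
    (hcard : (n : Cardinal) ≤ Cardinal.mk D) :
    (Set.univ : Set Y) ≠ ⋃ i, (Ys i : Set Y) := by
  obtain ⟨x, hx⟩ := Submodule.exists_forall_notMem_of_card_le Finset.univ Ys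
    (fun i _ => hprop i) (by simpa using hcard)
  intro huniv
  obtain ⟨i, hi⟩ := Set.mem_iUnion.mp (huniv ▸ Set.mem_univ x)
  exact hx i (Finset.mem_univ i) hi
end

section
/- Let D be a division ring and Y a finite-dimensional left D-vector space. There is no finite family Y₁, …, Y_n of nonzero subspaces of Y with n ≤ card(D) such that every maximal (codimension-one) subspace of Y contains some Y_i. -/
/-!
Choose nonzero vectors `yᵢ ∈ Yᵢ`. A vector space over a division ring `R` is not the union of
at most `#R` proper subspaces: if `x` avoids all of them but `Z`, and `y ∉ Z`, then the line
`y + R • x` misses `Z` and meets every other subspace at most once. Applied to the right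
`D`-space of functionals on `Y` and its hyperplanes `{f | f yᵢ = 0}`, this gives a functional
`f ≠ 0` with `f yᵢ ≠ 0` for all `i`, and `ker f` is a maximal subspace containing no `Yᵢ`.
-/

open Cardinal

theorem Submodule.exists_forall_notMem_of_card_le_s5 {ι R V : Type*} [DivisionRing R]
    [AddCommGroup V] [Module R V] (p : ι → Submodule R V) (s : Finset ι)
    (hp : ∀ i ∈ s, p i ≠ ⊤) (hs : (s.card : Cardinal) ≤ #R) :
    ∃ v, ∀ i ∈ s, v ∉ p i := by
  classical
  induction s using Finset.induction_on with
  | empty => exact ⟨0, by simp⟩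
  | insert j s hj ih =>
    rw [Finset.card_insert_of_notMem hj] at hs
    obtain ⟨x, hx⟩ := ih (fun i hi ↦ hp i (Finset.mem_insert_of_mem hi))
      (le_trans (by exact_mod_cast Nat.le_succ _) hs)
    by_contra! hcov
    have hxj : x ∈ p j := by
      obtain ⟨i, hi, hxi⟩ := hcov x
      rcases Finset.mem_insert.mp hi with rfl | hi
      exacts [hxi, (hx i hi hxi).elim]
    obtain ⟨y, hy⟩ : ∃ y, y ∉ p j := by
      by_contra! h
      exact hp j (Finset.mem_insert_self j s) (eq_top_iff'.mpr h)
    have hline : ∀ t : R, ∃ i ∈ s, y + t • x ∈ p i := by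
      intro t
      obtain ⟨i, hi, hyi⟩ := hcov (y + t • x)
      rcases Finset.mem_insert.mp hi with rfl | hi
      · exact (hy (((p i).add_mem_iff_left ((p i).smul_mem t hxj)).mp hyi)).elim
      · exact ⟨i, hi, hyi⟩
    choose idx hidx hmem using hline
    have hinj : Function.Injective fun t ↦ (⟨idx t, hidx t⟩ : s) := by
      intro t t' h
      simp only [Subtype.mk.injEq] at h
      by_contra hne
      have : (t - t') • x ∈ p (idx t) := by
        convert sub_mem (hmem t) (h ▸ hmem t') using 1
        rw [sub_smul]
        abel
      exact hx _ (hidx t) (((p _).smul_mem_iff (sub_ne_zero.mpr hne)).mp this)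
    have : Finite R := Finite.of_injective _ hinj
    have hcard := Nat.card_le_card_of_injective _ hinj
    rw [Nat.card_eq_finsetCard] at hcard
    have : s.card + 1 ≤ Nat.card R := by exact_mod_cast hs.trans_eq Nat.cast_card.symm
    omega

theorem LinearMap.exists_ne_zero_forall_apply_ne_zero_of_card_le {ι D Y : Type*}
    [DivisionRing D] [AddCommGroup Y] [Module D Y] [Nontrivial Y] [Fintype ι]
    (y : ι → Y) (hy : ∀ i, y i ≠ 0) (hι : (Fintype.card ι : Cardinal) ≤ #D) :
    ∃ f : Y →ₗ[D] D, f ≠ 0 ∧ ∀ i, f (y i) ≠ 0 := by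
  rcases isEmpty_or_nonempty ι with _ | ⟨⟨i₀⟩⟩
  · obtain ⟨v, hv⟩ := exists_ne (0 : Y)
    obtain ⟨f, hf⟩ := Module.Projective.exists_dual_ne_zero D hv
    exact ⟨f, fun h ↦ hf (by simp [h]), isEmptyElim⟩
  let p i : Submodule Dᵐᵒᵖ (Y →ₗ[D] D) := LinearMap.ker (LinearMap.applyₗ' Dᵐᵒᵖ (y i))
  have hp : ∀ i ∈ Finset.univ, p i ≠ ⊤ := by
    intro i _ h
    obtain ⟨f, hf⟩ := Module.Projective.exists_dual_ne_zero D (hy i)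
    exact hf (LinearMap.mem_ker.mp (h ▸ Submodule.mem_top : f ∈ p i))
  obtain ⟨f, hf⟩ := Submodule.exists_forall_notMem_of_card_le_s5 p Finset.univ hp
    (by rwa [Finset.card_univ, mk_congr MulOpposite.opEquiv.symm])
  have hf i : f (y i) ≠ 0 := fun h ↦ hf i (Finset.mem_univ i) (LinearMap.mem_ker.mpr h)
  exact ⟨f, fun h ↦ hf i₀ (by simp [h]), hf⟩

theorem stmt5_general (D Y : Type*) [DivisionRing D] [AddCommGroup Y] [Module D Y]
    [Nontrivial Y] :
    ¬ ∃ (n : ℕ) (Ys : Fin n → Submodule D Y),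
        (∀ i, Ys i ≠ ⊥) ∧ (n : Cardinal) ≤ Cardinal.mk D ∧
        ∀ W : Submodule D Y, IsCoatom W → ∃ i, Ys i ≤ W := by
  rintro ⟨n, Ys, hne, hcard, hcov⟩
  choose y hyYs hy using fun i ↦ (Ys i).exists_mem_ne_zero_of_ne_bot (hne i)
  obtain ⟨f, hf0, hf⟩ :=
    LinearMap.exists_ne_zero_forall_apply_ne_zero_of_card_le y hy (by simpa using hcard)
  obtain ⟨i, hi⟩ :=
    hcov _ (LinearMap.isCoatom_ker_of_surjective (LinearMap.surjective_of_ne_zero hf0))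
  exact hf i (LinearMap.mem_ker.mp (hi (hyYs i)))

/-- **Lemma 3.5, second part.** For a nonzero finite-dimensional vector space `Y` over a
division ring `D`, there is no family of `n ≤ card D` nonzero subspaces such that every
maximal (codimension-one) subspace of `Y` contains one of them. -/
theorem stmt5 (D Y : Type*) [DivisionRing D] [AddCommGroup Y] [Module D Y]
    [FiniteDimensional D Y] [Nontrivial Y] :
    ¬ ∃ (n : ℕ) (Ys : Fin n → Submodule D Y),
        (∀ i, Ys i ≠ ⊥) ∧ (n : Cardinal) ≤ Cardinal.mk D ∧
        ∀ W : Submodule D Y, IsCoatom W → ∃ i, Ys i ≤ W :=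
  stmt5_general D Y
end

section
/- Let V be a simple Artinian ring, Y a left V-module, f' a minimal idempotent of V, and N = card(f'Vf'). Then Y cannot be written as a union of at most N proper submodules. -/
/-!
Induct on the number of submodules: some `y` avoids all of them but one, `M`, so `y ∈ M`.
A simple ring acts faithfully on `Y ⧸ M`, so some `z = f • s` lies outside `M`. The points `z`
and `y + a • z`, `a ∈ f V f`, outnumber the submodules, so two of them lie in a common `N`.
As `V f` is a minimal left ideal, every nonzero `d ∈ f V f` satisfies `c * d = f` for some `c`;
hence `z ∈ N`, and then `y ∈ N`, which is impossible.
-/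

open Finset

section

variable {V Y : Type*} [Ring V] [AddCommGroup Y] [Module V Y]

theorem exists_smul_notMem_of_ne_top [IsSimpleRing V] {M : Submodule V Y} (hM : M ≠ ⊤)
    {a : V} (ha : a ≠ 0) : ∃ s : Y, a • s ∉ M := by
  have hann : Module.annihilator V (Y ⧸ M) = ⊥ := by
    refine ((isSimpleRing_iff_isTwoSided_imp.mp ‹_›).2 _ inferInstance).resolve_right ?_
    rw [Module.annihilator_eq_top_iff, Submodule.Quotient.subsingleton_iff]
    exact hM
  have : a ∉ Module.annihilator V (Y ⧸ M) := by rwa [hann, Ideal.mem_bot]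
  rw [Module.mem_annihilator] at this
  push Not at this
  obtain ⟨m, hm⟩ := this
  induction m using Submodule.Quotient.induction_on with
  | H s => exact ⟨s, by rwa [← Submodule.Quotient.mk_smul, ne_eq,
      Submodule.Quotient.mk_eq_zero] at hm⟩

theorem exists_mul_eq_of_minimal_idempotent [IsSemisimpleRing V] {f : V}
    (hf : IsIdempotentElem f)
    (hmin : ∀ e : V, IsIdempotentElem e → e ≠ 0 → e * f = e → f * e = e → e = f)
    {d : V} (hdf : d * f = d) (hd : d ≠ 0) : ∃ c : V, c * d = f := by
  obtain ⟨e, he, hspan⟩ := IsSemisimpleRing.ideal_eq_span_idempotent (Ideal.span {d})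
  obtain ⟨r, hr⟩ : ∃ r, r * d = e :=
    Ideal.mem_span_singleton'.mp (hspan ▸ Ideal.mem_span_singleton_self e)
  have hef : e * f = e := by rw [← hr, mul_assoc, hdf]
  have he0 : e ≠ 0 := by
    rintro rfl
    exact hd (by simpa [Ideal.span_singleton_eq_bot] using hspan)
  have hfe : f * e = f := by
    refine hmin (f * e) ?_ ?_ (by rw [mul_assoc, hef]) (by rw [← mul_assoc, hf.eq])
    · change f * e * (f * e) = f * e
      rw [mul_assoc, ← mul_assoc e, hef, he.eq]
    · intro h
      apply he0
      calc e = e * f * e := by rw [hef, he.eq]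
        _ = 0 := by rw [mul_assoc, h, mul_zero]
  have hfI : f ∈ Ideal.span {d} := by
    rw [hspan, ← hfe]
    exact Ideal.mul_mem_left _ f (Ideal.mem_span_singleton_self e)
  exact Ideal.mem_span_singleton'.mp hfI

theorem exists_mem_of_line_covered {A : Finset V} {S : Finset (Submodule V Y)}
    (hSA : #S ≤ #A) {y z : Y}
    (hz : ∀ a ∈ A, ∀ b ∈ A, a ≠ b → ∀ M : Submodule V Y, (a - b) • z ∈ M → z ∈ M)
    (hcov : ∀ x : Y, ∃ M ∈ S, x ∈ M) : ∃ M ∈ S, y ∈ M ∧ z ∈ M := by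
  by_contra! h
  obtain ⟨M₀, hM₀, hzM₀⟩ := hcov z
  choose g hgS hg using fun a : V => hcov (y + a • z)
  have hzg : ∀ a, z ∉ g a := fun a hz' =>
    h (g a) (hgS a) (by simpa using sub_mem (hg a) ((g a).smul_mem a hz')) hz'
  have hmaps : Set.MapsTo g A (S.erase M₀) := fun a _ =>
    mem_erase.mpr ⟨fun e => hzg a (e ▸ hzM₀), hgS a⟩
  have hcard : #(S.erase M₀) < #A := by
    rw [card_erase_of_mem hM₀]
    have := card_pos.mpr ⟨M₀, hM₀⟩
    omega
  obtain ⟨a, ha, b, hb, hab, hgab⟩ := exists_ne_map_eq_of_card_lt_of_maps_to hcard hmaps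
  have hdiff : (a - b) • z ∈ g a := by
    have := sub_mem (hg a) (hgab ▸ hg b)
    rwa [add_sub_add_left_eq_sub, ← sub_smul] at this
  exact hzg a (hz a ha b hb hab _ hdiff)

theorem exists_forall_notMem_of_card_le {f : V} (hf : IsIdempotentElem f) {A : Finset V}
    (hA : ∀ a ∈ A, ∀ b ∈ A, a ≠ b → ∃ c : V, c * (a - b) = f) (S : Finset (Submodule V Y))
    (hS : ∀ M ∈ S, ∃ s : Y, f • s ∉ M) (hSA : #S ≤ #A) : ∃ x : Y, ∀ M ∈ S, x ∉ M := by
  induction S using Finset.induction_on with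
  | empty => exact ⟨0, by simp⟩
  | insert M T _ ih =>
    obtain ⟨y, hy⟩ := ih (fun N hN => hS N (mem_insert_of_mem hN))
      ((card_le_card (subset_insert M T)).trans hSA)
    obtain ⟨s, hs⟩ := hS M (mem_insert_self M T)
    by_contra! hcov
    have hline : ∀ a ∈ A, ∀ b ∈ A, a ≠ b → ∀ N : Submodule V Y, (a - b) • f • s ∈ N →
        f • s ∈ N := by
      intro a ha b hb hab N h
      obtain ⟨c, hc⟩ := hA a ha b hb hab
      have := N.smul_mem c h
      rwa [← mul_smul, hc, ← mul_smul, hf.eq] at this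
    obtain ⟨N, hN, hyN, hzN⟩ := exists_mem_of_line_covered (y := y) hSA hline hcov
    rcases mem_insert.mp hN with rfl | hNT
    · exact hs hzN
    · exact hy N hNT hyN

end

/-- **Lemma 3.5** (as stated for simple Artinian rings). If `V` is a simple Artinian
ring, `f'` a minimal idempotent of `V`, and `N = card (f' V f')`, then a left `V`-module
`Y` is not the union of at most `N` proper submodules. -/
theorem stmt6 (V Y : Type*) [Ring V] [IsSimpleRing V] [IsArtinianRing V]
    [AddCommGroup Y] [Module V Y]
    (f : V) (hf : IsIdempotentElem f) (hf0 : f ≠ 0)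
    (hmin : ∀ e : V, IsIdempotentElem e → e ≠ 0 → e * f = e → f * e = e → e = f)
    (n : ℕ) (Ys : Fin n → Submodule V Y) (hYs : ∀ i, Ys i ≠ ⊤)
    (hcard : (n : Cardinal) ≤ Cardinal.mk {x : V // ∃ v : V, x = f * v * f}) :
    (Set.univ : Set Y) ≠ ⋃ i, (Ys i : Set Y) := by
  obtain ⟨T, hT⟩ := Cardinal.exists_finset_le_card _ n hcard
  have hA : ∀ a ∈ T.map (.subtype _), ∀ b ∈ T.map (.subtype _), a ≠ b →
      ∃ c : V, c * (a - b) = f := by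
    simp only [mem_map, Function.Embedding.coe_subtype]
    rintro _ ⟨⟨a, va, rfl⟩, -, rfl⟩ _ ⟨⟨b, vb, rfl⟩, -, rfl⟩ hab
    exact exists_mul_eq_of_minimal_idempotent hf hmin
      (by simp only [sub_mul, mul_assoc, hf.eq]) (sub_ne_zero.mpr hab)
  have hS : ∀ M ∈ univ.image Ys, ∃ s : Y, f • s ∉ M := by
    simp only [mem_image, mem_univ, true_and]
    rintro _ ⟨i, rfl⟩
    exact exists_smul_notMem_of_ne_top (hYs i) hf0
  obtain ⟨x, hx⟩ := exists_forall_notMem_of_card_le hf hA _ hS (by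
    rw [card_map]
    exact card_image_le.trans ((card_fin n).le.trans hT))
  intro h
  obtain ⟨i, hi⟩ := Set.mem_iUnion.mp (h ▸ Set.mem_univ x)
  exact hx _ (mem_image_of_mem _ (mem_univ i)) hi
end

section
/- Let k be a field with more than 2 elements, and let m = n = q ≥ 1. Let A_q be the space of q×q matrices over k whose diagonal entries are all equal to each other (all off-diagonal entries arbitrary). Then A_q satisfies: for every nonzero column vector b ∈ k^q there is a nonzero row vector c ∈ k^q with the rank-one matrix b·c ∈ A_q, and for every nonzero row vector c there is a nonzero column vector b with b·c ∈ A_q. -/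
theorem exists_ne_zero_forall_mul_apply_eq {ι G₀ : Type*} [GroupWithZero G₀] [DecidableEq ι]
    (b : ι → G₀) (hb : b ≠ 0) : ∃ c : ι → G₀, c ≠ 0 ∧ ∀ i j, b i * c i = b j * c j := by
  by_cases hunit : ∀ i, b i ≠ 0
  · refine ⟨b⁻¹, fun hinv => hb ?_, fun i j => ?_⟩
    · ext i
      simpa using congrFun hinv i
    · simp [mul_inv_cancel₀ (hunit i), mul_inv_cancel₀ (hunit j)]
  · obtain ⟨i₀, hi₀⟩ := not_forall_not.mp hunit
    have hprod : ∀ i, b i * (Pi.single i₀ 1 : ι → G₀) i = 0 := fun i => by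
      rcases eq_or_ne i i₀ with rfl | hi
      · simp [hi₀]
      · simp [hi]
    exact ⟨Pi.single i₀ 1, by simp, fun i j => by rw [hprod i, hprod j]⟩

theorem stmt7_general (k : Type*) [Field k] (q : ℕ) :
    (∀ b : Fin q → k, b ≠ 0 → ∃ c : Fin q → k, c ≠ 0 ∧
        ∀ i j : Fin q, Matrix.vecMulVec b c i i = Matrix.vecMulVec b c j j) ∧
    (∀ c : Fin q → k, c ≠ 0 → ∃ b : Fin q → k, b ≠ 0 ∧
        ∀ i j : Fin q, Matrix.vecMulVec b c i i = Matrix.vecMulVec b c j j) := by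
  simp only [Matrix.vecMulVec_apply]
  refine ⟨exists_ne_zero_forall_mul_apply_eq, fun c hc => ?_⟩
  simpa only [mul_comm] using exists_ne_zero_forall_mul_apply_eq c hc

/-- For a field `k` with more than two elements and `q ≥ 1`, the space `A_q` of `q × q`
matrices whose diagonal entries all coincide contains, for every nonzero column vector
`b`, a nonzero rank-one matrix `b·c`, and dually for every nonzero row vector `c`. -/
theorem stmt7 (k : Type*) [Field k] (hk : (2 : Cardinal) < Cardinal.mk k)
    (q : ℕ) (hq : 0 < q) :
    (∀ b : Fin q → k, b ≠ 0 → ∃ c : Fin q → k, c ≠ 0 ∧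
        ∀ i j : Fin q, Matrix.vecMulVec b c i i = Matrix.vecMulVec b c j j) ∧
    (∀ c : Fin q → k, c ≠ 0 → ∃ b : Fin q → k, b ≠ 0 ∧
        ∀ i j : Fin q, Matrix.vecMulVec b c i i = Matrix.vecMulVec b c j j) :=
  stmt7_general k q
end

section
/- Let k be a field, m, n, q positive integers with q ≤ min(m,n), and let A_q be the space of m×n matrices over k supported on the union of the first q rows and first q columns and whose first q diagonal entries are all equal. Then for every nonzero b ∈ k^m there exists a nonzero c ∈ k^n such that the rank-one matrix b·cᵀ lies in A_q, and symmetrically for every nonzero c ∈ k^n there exists a nonzero b ∈ k^m with b·cᵀ ∈ A_q. -/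
/-!
If `b` vanishes at some diagonal index `i < q`, the outer product of `b` with the `i`-th
standard basis vector lives in column `i` and has zero diagonal. Otherwise `b₀, …, b_{q-1}` are
invertible and `c = (b₀⁻¹, …, b_{q-1}⁻¹, 0, …, 0)` gives `b·cᵀ` with all first `q` diagonal
entries equal to `1`. The statement for `c` is the transpose of the one for `b`, since
`A_q` is closed under transposition.
-/

open Matrix

/-- The space `A_q` of the paper. -/
def hookMatrices (k : Type*) [Zero k] (m n q : ℕ) : Set (Matrix (Fin m) (Fin n) k) :=
  {M | (∀ (i : Fin m) (j : Fin n), q ≤ (i : ℕ) → q ≤ (j : ℕ) → M i j = 0) ∧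
    (∀ (i : Fin m) (j : Fin n) (i' : Fin m) (j' : Fin n),
      (i : ℕ) = (j : ℕ) → (i' : ℕ) = (j' : ℕ) → (i : ℕ) < q → (i' : ℕ) < q →
        M i j = M i' j')}

namespace hookMatrices

variable {k : Type*} {m n q : ℕ}

theorem transpose_mem [Zero k] {M : Matrix (Fin m) (Fin n) k} (hM : M ∈ hookMatrices k m n q) :
    Mᵀ ∈ hookMatrices k n m q :=
  ⟨fun j i hj hi => hM.1 i j hi hj,
    fun j i j' i' hji hji' hj hj' => hM.2 i j i' j' hji.symm hji'.symm (hji ▸ hj) (hji' ▸ hj')⟩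

theorem vecMulVec_mem [MulZeroClass k] {b : Fin m → k} {c : Fin n → k}
    (hc : ∀ j : Fin n, q ≤ (j : ℕ) → c j = 0)
    (t : k) (hdiag : ∀ (i : Fin m) (j : Fin n), (i : ℕ) = j → (i : ℕ) < q → b i * c j = t) :
    vecMulVec b c ∈ hookMatrices k m n q := by
  refine ⟨fun i j _ hj => ?_, fun i j i' j' hij hij' hi hi' => ?_⟩
  · rw [vecMulVec_apply, hc j hj, mul_zero]
  · rw [vecMulVec_apply, vecMulVec_apply, hdiag i j hij hi, hdiag i' j' hij' hi']

theorem exists_vecMulVec_mem_of_diag_eq_zero [MulZeroOneClass k] [Nontrivial k] (hqn : q ≤ n)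
    (b : Fin m → k) (i₀ : Fin m) (hi₀ : (i₀ : ℕ) < q) (hb : b i₀ = 0) :
    ∃ c : Fin n → k, c ≠ 0 ∧ vecMulVec b c ∈ hookMatrices k m n q := by
  let j₀ : Fin n := ⟨i₀, hi₀.trans_le hqn⟩
  refine ⟨Pi.single j₀ 1, Pi.single_ne_zero_iff.mpr one_ne_zero,
    vecMulVec_mem (fun j hj => ?_) 0 fun i j hij _ => ?_⟩
  · exact Pi.single_eq_of_ne (fun h => by subst h; exact absurd hj (not_le.mpr hi₀)) _
  · by_cases hj : j = j₀
    · rw [show i = i₀ from Fin.ext (hij.trans (congrArg Fin.val hj)), hb, zero_mul]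
    · rw [Pi.single_eq_of_ne hj, mul_zero]

theorem exists_vecMulVec_mem_of_diag_ne_zero [Field k] (hq : 0 < q) (hqm : q ≤ m) (hqn : q ≤ n)
    (b : Fin m → k) (hb : ∀ i : Fin m, (i : ℕ) < q → b i ≠ 0) :
    ∃ c : Fin n → k, c ≠ 0 ∧ vecMulVec b c ∈ hookMatrices k m n q := by
  let c : Fin n → k := fun j => if h : (j : ℕ) < q then (b ⟨j, h.trans_le hqm⟩)⁻¹ else 0
  have hc_ne : c ≠ 0 := fun h => hb ⟨0, hq.trans_le hqm⟩ hq <|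
    inv_eq_zero.mp (by simpa [c, hq] using congrFun h ⟨0, hq.trans_le hqn⟩)
  refine ⟨c, hc_ne, vecMulVec_mem (fun j hj => dif_neg (by omega)) 1 fun i j hij hi => ?_⟩
  have hj : (j : ℕ) < q := hij ▸ hi
  simp only [c, dif_pos hj, show (⟨j, hj.trans_le hqm⟩ : Fin m) = i from Fin.ext hij.symm]
  exact mul_inv_cancel₀ (hb i hi)

theorem exists_vecMulVec_mem [Field k] (hq : 0 < q) (hqm : q ≤ m) (hqn : q ≤ n)
    (b : Fin m → k) : ∃ c : Fin n → k, c ≠ 0 ∧ vecMulVec b c ∈ hookMatrices k m n q := by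
  by_cases h : ∃ i : Fin m, (i : ℕ) < q ∧ b i = 0
  · obtain ⟨i₀, hi₀, hb⟩ := h
    exact exists_vecMulVec_mem_of_diag_eq_zero hqn b i₀ hi₀ hb
  · push Not at h
    exact exists_vecMulVec_mem_of_diag_ne_zero hq hqm hqn b h

end hookMatrices

/-- The space `A_q` of `m × n` matrices supported on the union of the first `q` rows and
first `q` columns, with equal first `q` diagonal entries, satisfies conditions (2.2) and
(2.3) of the paper: every nonzero `b ∈ k^m` admits a nonzero `c ∈ k^n` with the outer
product `b·cᵀ ∈ A_q`, and symmetrically. -/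
theorem stmt8 (k : Type*) [Field k] (m n q : ℕ) (hq : 0 < q) (hqm : q ≤ m) (hqn : q ≤ n) :
    let Aq : Set (Matrix (Fin m) (Fin n) k) :=
      {M | (∀ (i : Fin m) (j : Fin n), q ≤ (i : ℕ) → q ≤ (j : ℕ) → M i j = 0) ∧
        (∀ (i : Fin m) (j : Fin n) (i' : Fin m) (j' : Fin n),
          (i : ℕ) = (j : ℕ) → (i' : ℕ) = (j' : ℕ) → (i : ℕ) < q → (i' : ℕ) < q →
            M i j = M i' j')}
    (∀ b : Fin m → k, b ≠ 0 → ∃ c : Fin n → k, c ≠ 0 ∧ Matrix.vecMulVec b c ∈ Aq) ∧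
    (∀ c : Fin n → k, c ≠ 0 → ∃ b : Fin m → k, b ≠ 0 ∧ Matrix.vecMulVec b c ∈ Aq) := by
  intro Aq
  refine ⟨fun b _ => hookMatrices.exists_vecMulVec_mem hq hqm hqn b, fun c _ => ?_⟩
  obtain ⟨b, hb, hmem⟩ := hookMatrices.exists_vecMulVec_mem (k := k) hq hqn hqm c
  exact ⟨b, hb, transpose_vecMulVec c b ▸ hookMatrices.transpose_mem hmem⟩
end

section
/- Over the field k = F₂ of two elements, let S = k×k×k, T = k, B = k³ (an S-module componentwise), C = k², and A = k³ with the bilinear map h : A × B → C given by h((α₁,α₂,α₃),(β₁,β₂,β₃)) = α₁β₁(1,0) + α₂β₂(0,1) + α₃β₃(1,1). Then: (a) every nonzero a ∈ A induces a nonzero map h(a,−) : B → C; (b) for every maximal S-submodule B₀ ⊂ B there is a nonzero a ∈ A annihilating B₀; (c) for every one-dimensional subspace C₀ ⊆ C there is a nonzero a ∈ A with h(a,B) ⊆ C₀; yet (d) the length of B as S-module plus the dimension of C over k equals 5, while the length of A as (T,S)-bimodule plus 1 equals 4, so the inequality ℓ(B) + ℓ(C) ≤ ℓ(A) + 1 fails.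 -/
/-!
Writing `v₁, v₂, v₃` for the three nonzero vectors of `𝔽₂²`, the pairing is
`h(a, b) = ∑ aᵢ bᵢ vᵢ`, so `h(eᵢ, b) = bᵢ vᵢ`. Every proper ideal of `S = 𝔽₂³` lies in a
coordinate hyperplane `{bᵢ = 0}`, which `eᵢ` annihilates, and every line of `𝔽₂²` is spanned
by some `vᵢ`, which then contains `h(eᵢ, B)`. On the other hand `S` is a product of three
fields, so `ℓ_S(B) = 3`, while `dim C = 2`.
-/

open Order

theorem Module.length_pi_self {ι : Type*} [Fintype ι] (R : ι → Type*) [∀ i, CommRing (R i)] :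
    Module.length (Π i, R i) (Π i, R i) = ∑ i, Module.length (R i) (R i) := by
  let _ (i : ι) : Algebra (Π i, R i) (R i) := (Pi.evalRingHom R i).toAlgebra
  have hR (i : ι) : Module.length (Π i, R i) (R i) = Module.length (R i) (R i) :=
    Module.length_eq_of_surjective (Function.surjective_eval i)
  rw [← Finset.sum_congr rfl fun i _ => hR i]
  exact Module.length_pi_of_fintype (Π i, R i) R

theorem Module.length_fun_self (ι K : Type*) [Fintype ι] [Field K] :
    Module.length (ι → K) (ι → K) = Fintype.card ι := by
  simp [Module.length_pi_self]

theorem Ideal.exists_forall_apply_eq_zero_of_ne_top {ι K : Type*} [Finite ι] [Field K]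
    {I : Ideal (ι → K)} (hI : I ≠ ⊤) : ∃ i, ∀ b ∈ I, b i = 0 := by
  classical
  have := Fintype.ofFinite ι
  by_contra! h
  choose b hbI hb using h
  apply hI
  rw [Ideal.eq_top_iff_one, ← Finset.univ_sum_single (1 : ι → K)]
  refine I.sum_mem fun i _ => ?_
  have : Pi.single i 1 = Pi.single i (b i i)⁻¹ * b i := by
    ext j
    rcases eq_or_ne j i with rfl | hj
    · simp [hb]
    · simp [hj]
  simpa [this] using I.mul_mem_left _ (hbI i)

section WeightedPairing

variable {ι K M : Type*} [Fintype ι] [Field K] [AddCommGroup M] [Module K M]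

def weightedPairing (v : ι → M) (a b : ι → K) : M := ∑ i, (a i * b i) • v i

theorem weightedPairing_single_left [DecidableEq ι] (v : ι → M) (i : ι) (b : ι → K) :
    weightedPairing v (Pi.single i 1) b = b i • v i := by
  simp [weightedPairing, Pi.single_apply]

theorem weightedPairing_comm (v : ι → M) (a b : ι → K) :
    weightedPairing v a b = weightedPairing v b a := by
  simp only [weightedPairing, mul_comm]

theorem exists_weightedPairing_ne_zero [DecidableEq ι] {v : ι → M} (hv : ∀ i, v i ≠ 0)
    {a : ι → K} (ha : a ≠ 0) : ∃ b, weightedPairing v a b ≠ 0 := by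
  obtain ⟨i, hi⟩ := Function.ne_iff.mp ha
  exact ⟨Pi.single i 1, by
    rw [weightedPairing_comm, weightedPairing_single_left]; exact smul_ne_zero hi (hv i)⟩

theorem exists_ne_zero_forall_mem_weightedPairing_eq_zero [DecidableEq ι] (v : ι → M)
    {I : Ideal (ι → K)} (hI : I ≠ ⊤) :
    ∃ a : ι → K, a ≠ 0 ∧ ∀ b ∈ I, weightedPairing v a b = 0 := by
  obtain ⟨i, hi⟩ := Ideal.exists_forall_apply_eq_zero_of_ne_top hI
  exact ⟨Pi.single i 1, by simp, fun b hb => by simp [weightedPairing_single_left, hi b hb]⟩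

theorem exists_ne_zero_forall_weightedPairing_mem [DecidableEq ι] {v : ι → M}
    (hv : ∀ w : M, w ≠ 0 → w ∈ Set.range v) {C₀ : Submodule K M} (hC₀ : C₀ ≠ ⊥) :
    ∃ a : ι → K, a ≠ 0 ∧ ∀ b, weightedPairing v a b ∈ C₀ := by
  obtain ⟨w, hwC, hw⟩ := C₀.exists_mem_ne_zero_of_ne_bot hC₀
  obtain ⟨i, rfl⟩ := hv w hw
  exact ⟨Pi.single i 1, by simp, fun b => by
    rw [weightedPairing_single_left]; exact C₀.smul_mem _ hwC⟩

end WeightedPairing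

/-- **§5.1 counterexample over `𝔽₂`.** With `k = 𝔽₂`, `S = k³`, `T = k`, `B = k³`
(an `S`-module componentwise, i.e. `S` as a module over itself), `C = k²`, `A = k³`, and
`h(a,b) = a₁b₁(1,0) + a₂b₂(0,1) + a₃b₃(1,1)`: every nonzero `a` acts nontrivially, every
maximal `S`-submodule of `B` is annihilated by some nonzero `a`, every one-dimensional
subspace of `C` contains the range of some nonzero `a`, and yet
`ℓ(B) + ℓ(C) = 5 > 4 = ℓ(A) + 1` (lengths as Krull dimensions of submodule lattices;
the `(T,S)`-bimodule length of `A` equals its length as `S`-module, since `T = 𝔽₂` acts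
by scalars). -/
theorem stmt10
    (h : (Fin 3 → ZMod 2) → (Fin 3 → ZMod 2) → (Fin 2 → ZMod 2))
    (hdef : ∀ a b, h a b = ![a 0 * b 0 + a 2 * b 2, a 1 * b 1 + a 2 * b 2]) :
    (∀ a : Fin 3 → ZMod 2, a ≠ 0 → ∃ b : Fin 3 → ZMod 2, h a b ≠ 0) ∧
    (∀ B₀ : Submodule (Fin 3 → ZMod 2) (Fin 3 → ZMod 2), IsCoatom B₀ →
      ∃ a : Fin 3 → ZMod 2, a ≠ 0 ∧ ∀ b ∈ B₀, h a b = 0) ∧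
    (∀ C₀ : Submodule (ZMod 2) (Fin 2 → ZMod 2), IsAtom C₀ →
      ∃ a : Fin 3 → ZMod 2, a ≠ 0 ∧ ∀ b : Fin 3 → ZMod 2, h a b ∈ C₀) ∧
    (krullDim (Submodule (Fin 3 → ZMod 2) (Fin 3 → ZMod 2))
        + krullDim (Submodule (ZMod 2) (Fin 2 → ZMod 2)) = 5 ∧
      krullDim (Submodule (Fin 3 → ZMod 2) (Fin 3 → ZMod 2)) + 1 = 4 ∧
      ¬ (krullDim (Submodule (Fin 3 → ZMod 2) (Fin 3 → ZMod 2))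
            + krullDim (Submodule (ZMod 2) (Fin 2 → ZMod 2))
          ≤ krullDim (Submodule (Fin 3 → ZMod 2) (Fin 3 → ZMod 2)) + 1)) := by
  let v : Fin 3 → Fin 2 → ZMod 2 := ![![1, 0], ![0, 1], ![1, 1]]
  obtain rfl : h = weightedPairing v := by
    funext a b j
    fin_cases j <;> simp [hdef, weightedPairing, Fin.sum_univ_three, v]
  have hv_ne : ∀ i, v i ≠ 0 := by decide
  have hv_range : ∀ w : Fin 2 → ZMod 2, w ≠ 0 → w ∈ Set.range v := by decide
  have hB : krullDim (Submodule (Fin 3 → ZMod 2) (Fin 3 → ZMod 2)) = 3 := by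
    rw [← Module.coe_length, Module.length_fun_self]; rfl
  have hC : krullDim (Submodule (ZMod 2) (Fin 2 → ZMod 2)) = 2 := by
    rw [← Module.coe_length, Module.length_eq_finrank, Module.finrank_fin_fun]; rfl
  refine ⟨fun a ha => exists_weightedPairing_ne_zero hv_ne ha,
    fun B₀ hB₀ => exists_ne_zero_forall_mem_weightedPairing_eq_zero v hB₀.1,
    fun C₀ hC₀ => exists_ne_zero_forall_weightedPairing_mem hv_range hC₀.1, ?_⟩
  rw [hB, hC]
  norm_num
end

section
/- Let R be a left Artinian ring and M a left R-module. If L is a simple submodule of M/J(R)M, then M has a submodule N such that the inclusion N ⊆ M induces an isomorphism N/J(R)N ≅ L (with L the image of N in M/J(R)M). -/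
/-!
Lift generators of `L` to a finitely generated, hence Artinian, submodule of `M`; among its
submodules mapping onto `L` pick a minimal one, `N`. As `R/J` is semisimple, so is `N/JN`, hence
`(N ∩ JM)/JN` has a complement `C/JN` in it. Then `C + (N ∩ JM) = N`, so `C` still maps onto `L`,
minimality forces `C = N`, and `N ∩ JM = C ∩ (N ∩ JM) = JN`.
-/

section

open Submodule LinearMap

variable {R X Y : Type*} [Ring R] [AddCommGroup X] [Module R X] [AddCommGroup Y] [Module R Y]

theorem isSemisimpleModule_quotient_smul_top (I : Ideal R) [I.IsTwoSided]
    [IsSemisimpleRing (R ⧸ I)] : IsSemisimpleModule R (X ⧸ I • (⊤ : Submodule R X)) :=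
  (Module.isTorsionBySet_quotient_ideal_smul X I).isSemisimpleModule_iff.mp inferInstance

theorem Submodule.exists_sup_eq_top_inf_eq {P K : Submodule R X} (hPK : P ≤ K)
    [IsSemisimpleModule R (X ⧸ P)] : ∃ C : Submodule R X, C ⊔ K = ⊤ ∧ C ⊓ K = P := by
  have : ComplementedLattice (Set.Ici P) :=
    (comapMkQRelIso P).complementedLattice_iff.mp inferInstance
  obtain ⟨C, hC⟩ := ComplementedLattice.exists_isCompl (⟨K, hPK⟩ : Set.Ici P)
  exact ⟨C, congrArg Subtype.val hC.symm.sup_eq_top, congrArg Subtype.val hC.symm.inf_eq_bot⟩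

theorem LinearMap.ker_eq_smul_top_of_minimal {I : Ideal R} [I.IsTwoSided]
    [IsSemisimpleRing (R ⧸ I)] {f : X →ₗ[R] Y} (hY : Module.IsTorsionBySet R Y I)
    (hmin : ∀ C : Submodule R X, C.map f = range f → C = ⊤) : ker f = I • ⊤ := by
  have hIf : I • ⊤ ≤ ker f := smul_le.mpr fun r hr x _ ↦ by
    rw [mem_ker, map_smul]
    exact hY (a := ⟨r, hr⟩)
  have := isSemisimpleModule_quotient_smul_top (X := X) I
  obtain ⟨C, hsup, hinf⟩ := exists_sup_eq_top_inf_eq hIf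
  have hC : C = ⊤ := hmin C <| by
    rw [← Submodule.map_top, ← hsup, Submodule.map_sup, le_ker_iff_map.mp le_rfl, sup_bot_eq]
  rwa [hC, top_inf_eq] at hinf

theorem Submodule.inf_ker_eq_smul_of_minimal {I : Ideal R} [I.IsTwoSided]
    [IsSemisimpleRing (R ⧸ I)] {f : X →ₗ[R] Y} (hY : Module.IsTorsionBySet R Y I)
    {L : Submodule R Y} {N : Submodule R X} (hN : Minimal (fun C ↦ C.map f = L) N) :
    N ⊓ ker f = I • N := by
  have hker := (f ∘ₗ N.subtype).ker_eq_smul_top_of_minimal hY fun C hC ↦ by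
    rw [range_comp, Submodule.range_subtype, map_comp, hN.prop] at hC
    rw [← comap_map_eq_of_injective N.injective_subtype C,
      hN.eq_of_le hC (map_subtype_le N C), comap_subtype_self]
  rw [← map_comap_subtype, ← ker_comp, hker, map_smul'', Submodule.map_top,
    Submodule.range_subtype]

theorem Submodule.exists_fg_map_eq {f : X →ₗ[R] Y} (hf : Function.Surjective f)
    {L : Submodule R Y} (hL : L.FG) : ∃ N : Submodule R X, N.FG ∧ N.map f = L := by
  obtain ⟨s, rfl⟩ := hL
  refine ⟨span R (Function.surjInv hf '' s), fg_span (s.finite_toSet.image _), ?_⟩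
  rw [map_span, ← Set.image_comp, Function.comp_surjInv, Set.image_id]

theorem Submodule.exists_minimal_map_eq [IsArtinianRing R] {f : X →ₗ[R] Y}
    (hf : Function.Surjective f) {L : Submodule R Y} (hL : L.FG) :
    ∃ N : Submodule R X, Minimal (fun C ↦ C.map f = L) N := by
  obtain ⟨N₀, hN₀, hN₀L⟩ := exists_fg_map_eq hf hL
  have := isArtinian_of_fg_of_artinian N₀ hN₀
  have : WellFoundedLT (Set.Iic N₀) := N₀.mapIic.symm.strictMono.wellFoundedLT
  obtain ⟨⟨N, hN⟩, -, hmin⟩ := exists_minimal_le_of_wellFoundedLT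
    (fun C : Set.Iic N₀ ↦ C.1.map f = L) ⟨N₀, Set.self_mem_Iic⟩ hN₀L
  exact ⟨N, hmin.prop, fun C hC hCN ↦ hmin.le_of_le (y := ⟨C, hCN.trans hN⟩) hC hCN⟩

end

/-- **Lemma 7.1(i).** If `R` is left Artinian and `L` is a simple submodule of
`M/J(R)M`, then `M` has a submodule `N` whose image in `M/J(R)M` is exactly `L` and
such that the induced map `N/J(R)N → L` is an isomorphism (i.e. `N ⊓ J(R)M = J(R)N`). -/
theorem stmt11 (R M : Type*) [Ring R] [IsArtinianRing R] [AddCommGroup M] [Module R M]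
    (J : Ideal R) (hJ : J = Ideal.jacobson ⊥)
    (L : Submodule R (M ⧸ (J • ⊤ : Submodule R M)))
    (hL : IsSimpleModule R ↥L) :
    ∃ N : Submodule R M,
      N.map (J • ⊤ : Submodule R M).mkQ = L ∧
      N ⊓ (J • ⊤ : Submodule R M) = J • N := by
  obtain rfl : J = Ring.jacobson R := hJ.trans Ideal.jacobson_bot
  obtain ⟨N, hN⟩ := Submodule.exists_minimal_map_eq (Submodule.mkQ_surjective _)
    (Module.Finite.iff_fg.mp inferInstance : L.FG)
  refine ⟨N, hN.prop, ?_⟩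
  simpa only [Submodule.ker_mkQ] using Submodule.inf_ker_eq_smul_of_minimal
    (Module.isTorsionBySet_quotient_ideal_smul M _) hN
end

section
/- Let R be a ring and M a left R-module with an essential submodule E, and let f : E → ∏_{i∈I} L_i be a subdirect decomposition of E (an embedding with each composite E → L_i surjective). Then there is a subdirect decomposition g : M → ∏_{i∈I} M_i of M such that each M_i contains L_i as an essential submodule and f is the restriction of g to E. -/
/-! For each `i` let `Kᵢ ≤ E` be the kernel of `E → Lᵢ`, and use Zorn to choose `Nᵢ ≤ M` maximal
with `Nᵢ ⊓ E = Kᵢ`. Then `Lᵢ ≅ E ⧸ Kᵢ` embeds in `M ⧸ Nᵢ` with image `(E + Nᵢ) ⧸ Nᵢ`, and the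
maximality of `Nᵢ` makes this image essential: a nonzero `X ≤ M ⧸ Nᵢ` pulls back to a submodule
strictly above `Nᵢ`, which therefore meets `E` outside `Kᵢ`. On `E` the map `M → ∏ᵢ M ⧸ Nᵢ` is `f`
followed by these embeddings, so it is injective on the essential submodule `E`, hence injective. -/

theorem exists_maximal_inf_eq {α : Type*} [CompleteLattice α] [IsCompactlyGenerated α]
    {a b : α} (hba : b ≤ a) : ∃ c, Maximal (fun x => x ⊓ a = b) c := by
  have hsSup : ∀ s ⊆ {x | x ⊓ a = b}, IsChain (· ≤ ·) s → ∀ y ∈ s, sSup s ⊓ a = b :=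
    fun s hs hs_chain y hy =>
      calc sSup s ⊓ a = ⨆ x ∈ s, x ⊓ a := hs_chain.directedOn.sSup_inf_eq
        _ = ⨆ x ∈ s, b := biSup_congr fun _ hx => hs hx
        _ = b := biSup_const ⟨y, hy⟩
  obtain ⟨c, -, hc⟩ := zorn_le_nonempty₀ {x | x ⊓ a = b}
    (fun s hs hs_chain y hy => ⟨sSup s, hsSup s hs hs_chain y hy, fun z hz => le_sSup hz⟩)
    b (inf_eq_left.mpr hba)
  exact ⟨c, hc⟩

theorem LinearMap.exists_injective_comp_eq_of_ker_eq {R A B C : Type*} [Ring R]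
    [AddCommGroup A] [Module R A] [AddCommGroup B] [Module R B] [AddCommGroup C] [Module R C]
    {g : A →ₗ[R] B} (hg : Function.Surjective g) {ψ : A →ₗ[R] C} (h : ker g = ker ψ) :
    ∃ φ : B →ₗ[R] C, Function.Injective φ ∧ range φ = range ψ ∧ φ ∘ₗ g = ψ := by
  let e := g.quotKerEquivOfSurjective hg
  refine ⟨(ker g).liftQ ψ h.le ∘ₗ e.symm.toLinearMap, ?_, ?_, ?_⟩
  · exact (ker_eq_bot.mp (Submodule.ker_liftQ_eq_bot' _ _ h)).comp e.symm.injective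
  · rw [range_comp_of_range_eq_top _ e.symm.range, Submodule.range_liftQ]
  · ext x
    simp [e, quotKerEquivOfSurjective_symm_apply]

namespace Submodule

variable {R M : Type*} [Ring R] [AddCommGroup M] [Module R M]

theorem injective_of_injective_comp_subtype {P : Type*} [AddCommGroup P] [Module R P]
    {E : Submodule R M} (hE : ∀ X : Submodule R M, X ≠ ⊥ → E ⊓ X ≠ ⊥) {g : M →ₗ[R] P}
    (hg : Function.Injective (g ∘ₗ E.subtype)) : Function.Injective g := by
  rw [← LinearMap.ker_eq_bot] at hg ⊢
  by_contra hker
  refine hE _ hker (eq_bot_iff.mpr fun x ⟨hxE, hxg⟩ => ?_)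
  have : (⟨x, hxE⟩ : E) ∈ LinearMap.ker (g ∘ₗ E.subtype) := hxg
  simpa [hg] using this

theorem map_mkQ_inf_ne_bot_of_maximal {E K N : Submodule R M}
    (hN : Maximal (fun P => P ⊓ E = K) N) {X : Submodule R (M ⧸ N)} (hX : X ≠ ⊥) :
    E.map N.mkQ ⊓ X ≠ ⊥ := by
  intro hEX
  set P := X.comap N.mkQ
  have hNP : N ≤ P := by rw [← N.ker_mkQ]; exact comap_mono bot_le
  have hPE : P ⊓ E = K := by
    refine le_antisymm (fun x ⟨hxP, hxE⟩ => ?_) (hN.prop ▸ inf_le_inf_right E hNP)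
    have : N.mkQ x ∈ E.map N.mkQ ⊓ X := ⟨mem_map_of_mem hxE, hxP⟩
    rw [hEX, mem_bot, mkQ_apply, Quotient.mk_eq_zero] at this
    exact hN.prop ▸ ⟨this, hxE⟩
  refine hX (eq_bot_iff.mpr fun y hy => ?_)
  obtain ⟨m, rfl⟩ := N.mkQ_surjective y
  simpa using hN.2 hPE hNP hy

theorem exists_injective_essential_of_maximal {L : Type*} [AddCommGroup L] [Module R L]
    {E N : Submodule R M} {g : E →ₗ[R] L} (hg : Function.Surjective g)
    (hN : Maximal (fun P => P ⊓ E = (LinearMap.ker g).map E.subtype) N) :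
    ∃ φ : L →ₗ[R] M ⧸ N, Function.Injective φ ∧
      (∀ X : Submodule R (M ⧸ N), X ≠ ⊥ → LinearMap.range φ ⊓ X ≠ ⊥) ∧
      ∀ x : E, N.mkQ (x : M) = φ (g x) := by
  have hker : LinearMap.ker g = LinearMap.ker (N.mkQ ∘ₗ E.subtype) := by
    rw [LinearMap.ker_comp, ker_mkQ,
      ← comap_map_eq_of_injective E.injective_subtype (LinearMap.ker g), ← hN.prop,
      comap_inf, comap_subtype_self, inf_top_eq]
  obtain ⟨φ, hφinj, hφrange, hφ⟩ := LinearMap.exists_injective_comp_eq_of_ker_eq hg hker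
  refine ⟨φ, hφinj, fun X hX => ?_, fun x => (LinearMap.congr_fun hφ x).symm⟩
  rw [hφrange, LinearMap.range_comp, range_subtype]
  exact map_mkQ_inf_ne_bot_of_maximal hN hX

end Submodule

/-- **Lemma 7.2(ii).** If `E` is an essential submodule of `M` and `f : E → ∏ᵢ Lᵢ` is a
subdirect decomposition of `E`, then `M` has a subdirect decomposition
`g : M → ∏ᵢ Mᵢ` (with `Mᵢ = M/Nᵢ`) extending `f`, in which each `Lᵢ` embeds in `Mᵢ` as
an essential submodule. -/
theorem stmt14 (R M : Type*) [Ring R] [AddCommGroup M] [Module R M]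
    (ι : Type*) (L : ι → Type*) [∀ i, AddCommGroup (L i)] [∀ i, Module R (L i)]
    (E : Submodule R M)
    (hE : ∀ X : Submodule R M, X ≠ ⊥ → E ⊓ X ≠ ⊥)
    (f : E →ₗ[R] ∀ i, L i)
    (hfinj : Function.Injective f)
    (hfsurj : ∀ i, Function.Surjective fun x : E => f x i) :
    ∃ N : ι → Submodule R M,
      Function.Injective (fun (x : M) (i : ι) => (N i).mkQ x) ∧
      ∀ i, ∃ φ : L i →ₗ[R] M ⧸ N i,
        Function.Injective φ ∧
        (∀ X : Submodule R (M ⧸ N i), X ≠ ⊥ → LinearMap.range φ ⊓ X ≠ ⊥) ∧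
        ∀ x : E, (N i).mkQ (x : M) = φ (f x i) := by
  let g i : E →ₗ[R] L i := LinearMap.proj i ∘ₗ f
  choose N hN using fun i =>
    exists_maximal_inf_eq (Submodule.map_subtype_le E (LinearMap.ker (g i)))
  choose φ hφinj hφess hφ using fun i =>
    Submodule.exists_injective_essential_of_maximal (hfsurj i) (hN i)
  refine ⟨N, ?_, fun i => ⟨φ i, hφinj i, hφess i, hφ i⟩⟩
  refine Submodule.injective_of_injective_comp_subtype
    (g := LinearMap.pi fun i => (N i).mkQ) hE ?_
  have hrestrict :
      ⇑((LinearMap.pi fun i => (N i).mkQ) ∘ₗ E.subtype) = Pi.map (fun i => ⇑(φ i)) ∘ f := by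
    ext x i
    exact hφ i x
  rw [hrestrict]
  exact (Function.Injective.piMap hφinj).comp hfinj
end
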